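/- arXiv:2408.16641 — 7 statements merged into one kernel-verified Lean document; each statement's English description precedes it below -/
import Mathlib

section
/- Let ℓ be a prime, a a positive integer, and k an integer coprime to ℓ. Fix M ∈ GL₂(ℤ/ℓℤ) with det M ≡ k (mod ℓ). For any integer k̃ with k̃ ≡ k (mod ℓ), the number of matrices M̃ ∈ GL₂(ℤ/ℓᵃℤ) with M̃ ≡ M (mod ℓ) and det M̃ ≡ k̃ (mod ℓᵃ) equals ℓ^{3(a-1)}. -/
lemma auxNil (ℓ a : ℕ) (hℓ : ℓ.Prime) (h : ℓ ∣ ℓ^a) {z : ZMod (ℓ^a)}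
    (hz : ZMod.castHom h (ZMod ℓ) z = 0) : IsNilpotent z := by
  haveI : NeZero ℓ := ⟨hℓ.ne_zero⟩
  haveI : NeZero (ℓ^a) := ⟨pow_ne_zero a hℓ.ne_zero⟩
  have hv : ((z.val : ℕ) : ZMod ℓ) = 0 := by
    rwa [ZMod.castHom_apply, ← ZMod.natCast_val] at hz
  obtain ⟨c, hc⟩ := (ZMod.natCast_eq_zero_iff _ _).mp hv
  have hzz : z = (ℓ : ZMod (ℓ^a)) * (c : ZMod (ℓ^a)) := by
    have h1 : z = ((z.val : ℕ) : ZMod (ℓ^a)) := by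
      rw [ZMod.natCast_val, ZMod.cast_id]
    rw [h1, hc]; push_cast; ring
  refine ⟨a, ?_⟩
  rw [hzz, mul_pow, ← Nat.cast_pow, ZMod.natCast_self, zero_mul]

lemma auxKerCard (ℓ a : ℕ) (hℓ : ℓ.Prime) (ha : 1 ≤ a) (h : ℓ ∣ ℓ^a) :
    Nat.card {x : ZMod (ℓ^a) // ZMod.castHom h (ZMod ℓ) x = 0} = ℓ^(a-1) := by
  haveI : NeZero ℓ := ⟨hℓ.ne_zero⟩
  haveI : NeZero (ℓ^a) := ⟨pow_ne_zero a hℓ.ne_zero⟩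
  set f := (ZMod.castHom h (ZMod ℓ)).toAddMonoidHom with hf
  have hsurj : Function.Surjective f :=
    fun y => ⟨ZMod.cast y, ZMod.ringHom_map_cast (ZMod.castHom h (ZMod ℓ)) y⟩
  have e := QuotientAddGroup.quotientKerEquivOfSurjective f hsurj
  have hcard := AddSubgroup.card_eq_card_quotient_mul_card_addSubgroup f.ker
  rw [Nat.card_zmod, Nat.card_congr e.toEquiv, Nat.card_zmod] at hcard
  have hker : Nat.card {x : ZMod (ℓ^a) // ZMod.castHom h (ZMod ℓ) x = 0}
      = Nat.card f.ker := Nat.card_congr (Equiv.subtypeEquivRight (fun x => (f.mem_ker).symm))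
  rw [hker]
  have : ℓ ^ a = ℓ * ℓ ^ (a-1) := by
    conv_lhs => rw [← Nat.succ_pred_eq_of_pos ha, pow_succ]
    rw [mul_comm]
    rfl
  exact (Nat.eq_of_mul_eq_mul_left hℓ.pos (this.symm.trans hcard)).symm

/-- The number of lifts of a fixed matrix `M ∈ GL₂(ℤ/ℓℤ)` to `GL₂(ℤ/ℓᵃℤ)` with
prescribed determinant `k̃ ≡ k (mod ℓ)` is `ℓ^(3(a-1))`. -/
theorem stmt0 (ℓ : ℕ) (hℓ : ℓ.Prime) (a : ℕ) (ha : 1 ≤ a) (k : ℤ)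
    (hk : IsCoprime k (ℓ : ℤ)) (M : GL (Fin 2) (ZMod ℓ))
    (hM : (M : Matrix (Fin 2) (Fin 2) (ZMod ℓ)).det = (k : ZMod ℓ))
    (k' : ℤ) (hk' : (k' : ZMod ℓ) = (k : ZMod ℓ)) :
    Nat.card {N : GL (Fin 2) (ZMod (ℓ ^ a)) //
      Matrix.GeneralLinearGroup.map
        (ZMod.castHom (dvd_pow_self ℓ (Nat.one_le_iff_ne_zero.mp ha)) (ZMod ℓ)) N = M ∧
      (N : Matrix (Fin 2) (Fin 2) (ZMod (ℓ ^ a))).det = (k' : ZMod (ℓ ^ a))} =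
      ℓ ^ (3 * (a - 1)) := by
  haveI : NeZero ℓ := ⟨hℓ.ne_zero⟩
  set hdvd : ℓ ∣ ℓ ^ a := dvd_pow_self ℓ (Nat.one_le_iff_ne_zero.mp ha) with hhdvd
  set π : ZMod (ℓ^a) →+* ZMod ℓ := ZMod.castHom hdvd (ZMod ℓ) with hπdef
  -- coprimality of k'
  have hcop' : IsCoprime k' (ℓ : ℤ) := by
    have hd : (ℓ : ℤ) ∣ k' - k := by
      apply (ZMod.intCast_zmod_eq_zero_iff_dvd (k' - k) ℓ).mp
      push_cast
      rw [hk', sub_self]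
    obtain ⟨t, ht⟩ := hd
    have hkk : k' = k + (ℓ : ℤ) * t := by linarith
    rw [hkk]
    exact hk.add_mul_left_left t
  -- (k' : ZMod (ℓ^a)) is a unit
  have hk'unit : IsUnit ((k' : ℤ) : ZMod (ℓ^a)) := by
    obtain ⟨u, v, huv⟩ := hcop'.pow_right (n := a)
    apply IsUnit.of_mul_eq_one ((u : ZMod (ℓ^a)))
    have : ((u * k' + v * (ℓ:ℤ)^a : ℤ) : ZMod (ℓ^a)) = 1 := by rw [huv]; norm_cast
    push_cast at this
    rw [← Nat.cast_pow, ZMod.natCast_self] at this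
    rw [mul_comm]
    linear_combination this
  -- π (k') = k mod ℓ
  have hπk' : π ((k' : ℤ) : ZMod (ℓ^a)) = ((k : ℤ) : ZMod ℓ) := by
    rw [map_intCast, hk']
  -- the entrywise lift L of M
  set L : Matrix (Fin 2) (Fin 2) (ZMod (ℓ^a)) := (M : Matrix (Fin 2) (Fin 2) (ZMod ℓ)).map ZMod.cast with hL
  have hLmap : L.map π = (M : Matrix (Fin 2) (Fin 2) (ZMod ℓ)) := by
    ext i j
    simp only [hL, Matrix.map_apply]
    exact ZMod.ringHom_map_cast π _
  have hLdet : π L.det = ((k : ℤ) : ZMod ℓ) := by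
    rw [RingHom.map_det, RingHom.mapMatrix_apply, hLmap, hM]
  -- det L is a unit
  have hLdetunit : IsUnit L.det := by
    have hnil : IsNilpotent (L.det - ((k' : ℤ) : ZMod (ℓ^a))) := by
      apply auxNil ℓ a hℓ hdvd
      rw [map_sub, hLdet, hπk', sub_self]
    have : L.det = ((k' : ℤ) : ZMod (ℓ^a)) + (L.det - ((k' : ℤ) : ZMod (ℓ^a))) := by ring
    rw [this]
    exact hnil.isUnit_add_left_of_commute hk'unit (Commute.all _ _)
  -- build N₀ with map π N₀ = M, det N₀ = k'
  set d : ZMod (ℓ^a) := ((k' : ℤ) : ZMod (ℓ^a)) * ↑hLdetunit.unit⁻¹ with hd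
  set N₀ : Matrix (Fin 2) (Fin 2) (ZMod (ℓ^a)) := L * Matrix.diagonal ![1, d] with hN₀
  have hdmul : d * L.det = ((k' : ℤ) : ZMod (ℓ^a)) := by
    rw [hd, mul_assoc, hLdetunit.val_inv_mul, mul_one]
  have hdetN₀ : N₀.det = ((k' : ℤ) : ZMod (ℓ^a)) := by
    rw [hN₀, Matrix.det_mul, Matrix.det_diagonal]
    simp only [Fin.prod_univ_two, Matrix.cons_val_zero, Matrix.cons_val_one, Matrix.head_cons,
      one_mul]
    rw [mul_comm]; exact hdmul
  have hπd : π d = 1 := by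
    have hku : IsUnit ((k : ℤ) : ZMod ℓ) := by
      obtain ⟨u, v, huv⟩ := hk
      apply IsUnit.of_mul_eq_one ((u : ZMod ℓ))
      have : ((u * k + v * (ℓ:ℕ) : ℤ) : ZMod ℓ) = 1 := by rw [huv]; norm_cast
      push_cast at this
      rw [ZMod.natCast_self] at this
      rw [mul_comm]
      linear_combination this
    have h1 : π d * π L.det = π ((k' : ℤ) : ZMod (ℓ^a)) := by
      rw [← map_mul, hdmul]
    rw [hLdet, hπk'] at h1
    haveI : Fact ℓ.Prime := ⟨hℓ⟩
    exact mul_right_cancel₀ hku.ne_zero (by rw [h1, one_mul])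

  -- N₀ reduces to M
  have hmapN₀ : N₀.map π = (M : Matrix (Fin 2) (Fin 2) (ZMod ℓ)) := by
    rw [hN₀, Matrix.map_mul, hLmap, Matrix.diagonal_map (map_zero π)]
    have h2 : (Matrix.diagonal fun m => π (![1, d] m)) = 1 := by
      have h3 : (fun m => π (![1, d] m)) = fun _ => (1 : ZMod ℓ) :=
        funext fun i => by fin_cases i <;> simp [hπd]
      rw [h3, Matrix.diagonal_one]
    rw [h2, mul_one]
  -- units of (1 + nilpotent) type
  have hunit_of : ∀ x : ZMod (ℓ^a), π x = 1 → IsUnit x := by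
    intro x hx
    have hnil : IsNilpotent (x - 1) :=
      auxNil ℓ a hℓ hdvd (by rw [map_sub, hx, map_one, sub_self])
    have hxx : x = 1 + (x - 1) := by ring
    rw [hxx]
    exact hnil.isUnit_add_left_of_commute isUnit_one (Commute.all _ _)
  -- N₀ is invertible
  have hWdet : IsUnit N₀ := (Matrix.isUnit_iff_isUnit_det N₀).mpr (by rw [hdetN₀]; exact hk'unit)
  set W : (Matrix (Fin 2) (Fin 2) (ZMod (ℓ^a)))ˣ := hWdet.unit with hWdef
  have hWval : (W : Matrix (Fin 2) (Fin 2) (ZMod (ℓ^a))) = N₀ := hWdet.unit_spec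
  have hWdet' : (W : Matrix (Fin 2) (Fin 2) (ZMod (ℓ^a))).det = ((k' : ℤ) : ZMod (ℓ^a)) := by
    rw [hWval, hdetN₀]
  have hWmap : (W : Matrix (Fin 2) (Fin 2) (ZMod (ℓ^a))).map π
      = (M : Matrix (Fin 2) (Fin 2) (ZMod ℓ)) := by rw [hWval, hmapN₀]
  have hGLmap : ∀ N : GL (Fin 2) (ZMod (ℓ^a)),
      ((Matrix.GeneralLinearGroup.map π N : GL (Fin 2) (ZMod ℓ)) :
        Matrix (Fin 2) (Fin 2) (ZMod ℓ)) = (N : Matrix (Fin 2) (Fin 2) (ZMod (ℓ^a))).map π :=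
    fun N => rfl
  -- E1 : GL-level subtype ≃ matrix-level subtype
  have E1 : {N : GL (Fin 2) (ZMod (ℓ ^ a)) //
      Matrix.GeneralLinearGroup.map π N = M ∧
      (N : Matrix (Fin 2) (Fin 2) (ZMod (ℓ ^ a))).det = (k' : ZMod (ℓ ^ a))} ≃
      {N : Matrix (Fin 2) (Fin 2) (ZMod (ℓ ^ a)) //
        N.map π = (M : Matrix (Fin 2) (Fin 2) (ZMod ℓ)) ∧ N.det = ((k' : ℤ) : ZMod (ℓ^a))} :=
    { toFun := fun N => ⟨(N.1 : Matrix (Fin 2) (Fin 2) (ZMod (ℓ^a))),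
        by rw [← hGLmap, N.2.1], N.2.2⟩
      invFun := fun N =>
        ⟨((Matrix.isUnit_iff_isUnit_det N.1).mpr (by rw [N.2.2]; exact hk'unit)).unit,
          by apply Units.ext; rw [hGLmap, IsUnit.unit_spec, N.2.1],
          by rw [IsUnit.unit_spec]; exact N.2.2⟩
      left_inv := fun N => Subtype.ext (Units.ext (IsUnit.unit_spec
        ((Matrix.isUnit_iff_isUnit_det ((N.1 : GL (Fin 2) (ZMod (ℓ^a))) :
            Matrix (Fin 2) (Fin 2) (ZMod (ℓ^a)))).mpr
          (by rw [N.2.2]; exact hk'unit))))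
      right_inv := fun N => Subtype.ext (IsUnit.unit_spec
        ((Matrix.isUnit_iff_isUnit_det N.1).mpr (by rw [N.2.2]; exact hk'unit))) }
  -- E2 : translate by W
  have E2 : {N : Matrix (Fin 2) (Fin 2) (ZMod (ℓ ^ a)) //
        N.map π = (M : Matrix (Fin 2) (Fin 2) (ZMod ℓ)) ∧ N.det = ((k' : ℤ) : ZMod (ℓ^a))} ≃
      {U : Matrix (Fin 2) (Fin 2) (ZMod (ℓ ^ a)) //
        U.map π = 1 ∧ U.det = 1} := by
    have hinvmapdet : ((↑W⁻¹ : Matrix (Fin 2) (Fin 2) (ZMod (ℓ^a))).map π) *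
        (M : Matrix (Fin 2) (Fin 2) (ZMod ℓ)) = 1 := by
      rw [← hWmap, ← Matrix.map_mul, Units.inv_mul]
      exact Matrix.map_one π (map_zero π) (map_one π)
    have hinvdet : (↑W⁻¹ : Matrix (Fin 2) (Fin 2) (ZMod (ℓ^a))).det *
        ((k' : ℤ) : ZMod (ℓ^a)) = 1 := by
      rw [← hWdet', ← Matrix.det_mul, Units.inv_mul, Matrix.det_one]
    exact
    { toFun := fun N => ⟨(↑W⁻¹ : Matrix (Fin 2) (Fin 2) (ZMod (ℓ^a))) * N.1,
        by rw [Matrix.map_mul, N.2.1, hinvmapdet],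
        by rw [Matrix.det_mul, N.2.2, hinvdet]⟩
      invFun := fun U => ⟨(↑W : Matrix (Fin 2) (Fin 2) (ZMod (ℓ^a))) * U.1,
        by rw [Matrix.map_mul, U.2.1, hWmap, mul_one],
        by rw [Matrix.det_mul, U.2.2, hWdet', mul_one]⟩
      left_inv := fun N => Subtype.ext (Units.mul_inv_cancel_left W N.1)
      right_inv := fun U => Subtype.ext (Units.inv_mul_cancel_left W U.1) }
  -- E3 : kernel-type subtype ≃ triple of kernel elements
  have E3 : {U : Matrix (Fin 2) (Fin 2) (ZMod (ℓ ^ a)) //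
        U.map π = 1 ∧ U.det = 1} ≃
      ({x : ZMod (ℓ^a) // π x = 0} × {x : ZMod (ℓ^a) // π x = 0} ×
        {x : ZMod (ℓ^a) // π x = 0}) := by
    refine ⟨fun U => (⟨U.1 0 1, ?_⟩, ⟨U.1 1 0, ?_⟩, ⟨U.1 1 1 - 1, ?_⟩),
      fun p => ⟨!![(1 + p.1.1 * p.2.1.1) * Ring.inverse (1 + p.2.2.1), p.1.1;
        p.2.1.1, 1 + p.2.2.1], ?_, ?_⟩, fun U => ?_, fun p => ?_⟩
    · have := congrFun (congrFun U.2.1 0) 1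
      rwa [Matrix.map_apply, Matrix.one_apply_ne (by decide)] at this
    · have := congrFun (congrFun U.2.1 1) 0
      rwa [Matrix.map_apply, Matrix.one_apply_ne (by decide)] at this
    · have := congrFun (congrFun U.2.1 1) 1
      rw [Matrix.map_apply, Matrix.one_apply_eq] at this
      rw [map_sub, map_one, this, sub_self]
    · -- map π = 1
      have hz1 : π (1 + p.2.2.1) = 1 := by rw [map_add, map_one, p.2.2.2, add_zero]
      have hu : IsUnit (1 + p.2.2.1) := hunit_of _ hz1
      have h00 : π ((1 + p.1.1 * p.2.1.1) * Ring.inverse (1 + p.2.2.1)) = 1 := by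
        have h1 : π ((1 + p.1.1 * p.2.1.1) * Ring.inverse (1 + p.2.2.1)) * π (1 + p.2.2.1)
            = 1 := by
          rw [← map_mul, mul_assoc, Ring.inverse_mul_cancel _ hu, mul_one, map_add, map_one,
            map_mul, p.1.2, zero_mul, add_zero]
        rwa [hz1, mul_one] at h1
      ext i j
      fin_cases i <;> fin_cases j <;>
        simp [Matrix.map_apply, Matrix.one_apply, h00, hz1, p.1.2, p.2.1.2]
    · -- det = 1
      have hu : IsUnit (1 + p.2.2.1) :=
        hunit_of _ (by rw [map_add, map_one, p.2.2.2, add_zero])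
      rw [Matrix.det_fin_two_of, mul_assoc, Ring.inverse_mul_cancel _ hu, mul_one]
      ring
    · -- left inverse
      have h11 : π (U.1 1 1) = 1 := by
        have := congrFun (congrFun U.2.1 1) 1
        rwa [Matrix.map_apply, Matrix.one_apply_eq] at this
      have hu : IsUnit (U.1 1 1) := hunit_of _ h11
      have hdet := U.2.2
      rw [Matrix.det_fin_two] at hdet
      apply Subtype.ext
      ext i j
      fin_cases i <;> fin_cases j
      · show (1 + U.1 0 1 * U.1 1 0) * Ring.inverse (1 + (U.1 1 1 - 1)) = U.1 0 0
        have e1 : 1 + (U.1 1 1 - 1) = U.1 1 1 := by ring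
        have e2 : 1 + U.1 0 1 * U.1 1 0 = U.1 0 0 * U.1 1 1 := by linear_combination -hdet
        rw [e1, e2, mul_assoc, Ring.mul_inverse_cancel _ hu, mul_one]
      · rfl
      · rfl
      · show 1 + (U.1 1 1 - 1) = U.1 1 1
        ring
    · -- right inverse
      refine Prod.ext (Subtype.ext ?_) (Prod.ext (Subtype.ext ?_) (Subtype.ext ?_)) <;> simp
  rw [Nat.card_congr (E1.trans (E2.trans E3)), Nat.card_prod, Nat.card_prod,
    auxKerCard ℓ a hℓ ha hdvd, ← pow_add, ← pow_add]
  congr 1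
  omega
end

section
/- Fix a prime ℓ, a positive integer a, and an integer k coprime to ℓ. The number of matrices M ∈ GL₂(ℤ/ℓᵃℤ) with M ≢ I (mod ℓ) and det M ≡ k (mod ℓᵃ) equals ℓ^{3(a-1)}·(ℓ³−ℓ−1) if k ≡ 1 (mod ℓ), and ℓ^{3(a-1)}·(ℓ³−ℓ) if k ≢ 1 (mod ℓ). -/
/-!
Sort the matrices of determinant `k` by their first row `(A, B)`. The ring `R = ℤ/ℓᵃ` is local
with residue map `r : R → 𝔽_ℓ`, so the equation `A D - B C = k` has `|R|` solutions `(C, D)` when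
`A` or `B` is a unit, and none when both lie in `𝔪 = ker r` (as `k` is a unit). This gives
`|R| (|R|² - |𝔪|²) = ℓ^{3(a-1)} (ℓ³ - ℓ)` matrices. Those congruent to `I` modulo `ℓ` are
determined by `A ∈ 1 + 𝔪` and `B, C ∈ 𝔪`, since `D = A⁻¹ (k + B C)` is then forced and
`D ≡ k`; there are `|𝔪|³ = ℓ^{3(a-1)}` of them if `k ≡ 1 (mod ℓ)` and none otherwise.
-/

open Matrix

section Fibers

variable {G H F : Type*} [AddGroup G] [AddGroup H] [FunLike F G H] [AddMonoidHomClass F G H]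

theorem natCard_fiber_eq_natCard_ker (f : F) (x₀ : G) :
    Nat.card {x // f x = f x₀} = Nat.card {x // f x = 0} :=
  Nat.card_congr <| (Equiv.subRight x₀).subtypeEquiv fun x => by simp [sub_eq_zero]

theorem natCard_eq_natCard_mul_natCard_ker [Finite G] [Fintype H] {f : F}
    (hf : Function.Surjective f) :
    Nat.card G = Nat.card H * Nat.card {x // f x = 0} := by
  calc Nat.card G = Nat.card (Σ y : H, {x // f x = y}) :=
        Nat.card_congr (Equiv.sigmaFiberEquiv f).symm
    _ = ∑ _y : H, Nat.card {x // f x = 0} := by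
        rw [Nat.card_sigma]
        refine Finset.sum_congr rfl fun y _ => ?_
        obtain ⟨x₀, rfl⟩ := hf y
        exact natCard_fiber_eq_natCard_ker f x₀
    _ = Nat.card H * Nat.card {x // f x = 0} := by
        simp [Nat.card_eq_fintype_card]

end Fibers

theorem natCard_subtype_not_and {α : Type*} [Finite α] (p q : α → Prop) :
    Nat.card {x // ¬p x ∧ q x} = Nat.card {x // q x} - Nat.card {x // p x ∧ q x} := by
  classical
  have := Fintype.ofFinite α
  simp only [Nat.card_eq_fintype_card, Fintype.card_subtype]
  rw [← Finset.card_filter_add_card_filter_not (s := Finset.univ.filter q) p]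
  simp only [Finset.filter_filter, and_comm, Nat.add_sub_cancel_left]

theorem Matrix.map_eq_one_iff_fin_two {α β : Type*} [Zero β] [One β] {f : α → β}
    (M : Matrix (Fin 2) (Fin 2) α) :
    M.map f = 1 ↔ f (M 0 0) = 1 ∧ f (M 0 1) = 0 ∧ f (M 1 0) = 0 ∧ f (M 1 1) = 1 := by
  rw [← Matrix.ext_iff]
  simp [Fin.forall_fin_two, Matrix.one_apply, and_assoc]

section CommRing

variable {R : Type*} [CommRing R]

theorem sub_mul_eq_iff_eq_inv_mul {A : R} (hA : IsUnit A) {B C D k : R} :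
    A * D - B * C = k ↔ D = ↑hA.unit⁻¹ * (k + B * C) := by
  rw [Units.eq_inv_mul_iff_mul_eq, IsUnit.unit_spec, sub_eq_iff_eq_add]

theorem natCard_sub_mul_eq_of_isUnit_left {A : R} (hA : IsUnit A) (B k : R) :
    Nat.card {p : R × R // A * p.2 - B * p.1 = k} = Nat.card R :=
  Nat.card_congr
    { toFun := fun p => p.1.1
      invFun := fun c => ⟨(c, ↑hA.unit⁻¹ * (k + B * c)), (sub_mul_eq_iff_eq_inv_mul hA).2 rfl⟩
      left_inv := fun p => Subtype.ext <| Prod.ext rfl ((sub_mul_eq_iff_eq_inv_mul hA).1 p.2).symm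
      right_inv := fun _ => rfl }

theorem natCard_sub_mul_eq_of_isUnit_right {B : R} (hB : IsUnit B) (A k : R) :
    Nat.card {p : R × R // A * p.2 - B * p.1 = k} = Nat.card R := by
  rw [← natCard_sub_mul_eq_of_isUnit_left hB.neg (-A) k]
  exact Nat.card_congr <| (Equiv.prodComm R R).subtypeEquiv fun p => by
    simp only [Equiv.prodComm_apply, Prod.fst_swap, Prod.snd_swap]
    ring_nf

theorem natCard_GL_subtype_det_eq {n : Type*} [Fintype n] [DecidableEq n] {k : R}
    (hk : IsUnit k) (p : Matrix n n R → Prop) :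
    Nat.card {M : GL n R // p M ∧ (M : Matrix n n R).det = k} =
      Nat.card {M : Matrix n n R // p M ∧ M.det = k} :=
  Nat.card_congr
    { toFun := fun M => ⟨M.1, M.2⟩
      invFun := fun M => ⟨nonsingInvUnit M.1 (by rw [M.2.2]; exact hk), M.2⟩
      left_inv := fun _ => Subtype.ext (Units.ext rfl)
      right_inv := fun _ => rfl }

end CommRing

section ResidueField

variable {R F : Type*} [CommRing R] [CommRing F] [Nontrivial F] (r : R →+* F)

theorem natCard_sub_mul_eq [DecidableEq F] (hr : ∀ x, r x ≠ 0 → IsUnit x) {k : R}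
    (hk : IsUnit k) (A B : R) :
    Nat.card {p : R × R // A * p.2 - B * p.1 = k} =
      if r A = 0 ∧ r B = 0 then 0 else Nat.card R := by
  split_ifs with h
  · refine @Nat.card_of_isEmpty _ ⟨fun ⟨p, hp⟩ => (hk.map r).ne_zero ?_⟩
    rw [← hp, map_sub, map_mul, map_mul, h.1, h.2, zero_mul, zero_mul, sub_zero]
  · rcases not_and_or.1 h with hA | hB
    · exact natCard_sub_mul_eq_of_isUnit_left (hr A hA) B k
    · exact natCard_sub_mul_eq_of_isUnit_right (hr B hB) A k

theorem natCard_det_eq [Fintype R] (hr : ∀ x, r x ≠ 0 → IsUnit x) {k : R} (hk : IsUnit k) :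
    Nat.card {M : Matrix (Fin 2) (Fin 2) R // M.det = k} =
      Nat.card R * (Nat.card R ^ 2 - Nat.card {x // r x = 0} ^ 2) := by
  classical
  let rows : Matrix (Fin 2) (Fin 2) R ≃ (R × R) × (R × R) :=
    { toFun := fun M => ((M 0 0, M 0 1), (M 1 0, M 1 1))
      invFun := fun x => !![x.1.1, x.1.2; x.2.1, x.2.2]
      left_inv := fun M => (Matrix.eta_fin_two M).symm
      right_inv := fun _ => rfl }
  have hker :
      Fintype.card {p : R × R // r p.1 = 0 ∧ r p.2 = 0} = Nat.card {x // r x = 0} ^ 2 := by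
    rw [← Nat.card_eq_fintype_card, sq, ← Nat.card_prod]
    exact Nat.card_congr <|
      Equiv.subtypeProdEquivProd (p := fun x => r x = 0) (q := fun x => r x = 0)
  calc Nat.card {M : Matrix (Fin 2) (Fin 2) R // M.det = k}
      = Nat.card (Σ p : R × R, {q : R × R // p.1 * q.2 - p.2 * q.1 = k}) :=
        Nat.card_congr <| (rows.subtypeEquiv fun M => by rw [det_fin_two]; rfl).trans
          (Equiv.subtypeProdEquivSigmaSubtype fun (p q : R × R) => p.1 * q.2 - p.2 * q.1 = k)
    _ = ∑ p : R × R, if r p.1 = 0 ∧ r p.2 = 0 then 0 else Nat.card R := by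
        rw [Nat.card_sigma]
        exact Finset.sum_congr rfl fun p _ => natCard_sub_mul_eq r hr hk p.1 p.2
    _ = Nat.card R * (Nat.card R ^ 2 - Nat.card {x // r x = 0} ^ 2) := by
        rw [Finset.sum_ite, Finset.sum_const_zero, zero_add, Finset.sum_const, smul_eq_mul,
          mul_comm, Finset.filter_not, Finset.card_sdiff_of_subset (Finset.filter_subset _ _),
          ← Fintype.card_subtype, hker, Finset.card_univ, Fintype.card_prod,
          Nat.card_eq_fintype_card, ← sq (Fintype.card R)]

theorem natCard_map_eq_one_det_eq [DecidableEq F] (hr : ∀ x, r x ≠ 0 → IsUnit x) (k : R) :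
    Nat.card {M : Matrix (Fin 2) (Fin 2) R // M.map r = 1 ∧ M.det = k} =
      if r k = 1 then Nat.card {x // r x = 0} ^ 3 else 0 := by
  split_ifs with hk
  · have hA (A : {x // r x = 1}) : IsUnit A.1 := hr A (by rw [A.2]; exact one_ne_zero)
    have hA_inv (A : {x // r x = 1}) : r ↑(hA A).unit⁻¹ = 1 := by
      have := congrArg r (hA A).unit.inv_mul
      rwa [map_mul, map_one, IsUnit.unit_spec, A.2, mul_one] at this
    have hunit := natCard_fiber_eq_natCard_ker r 1
    rw [map_one] at hunit
    calc Nat.card {M : Matrix (Fin 2) (Fin 2) R // M.map r = 1 ∧ M.det = k}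
        = Nat.card ({x // r x = 1} × {x // r x = 0} × {x // r x = 0}) := Nat.card_congr
          { toFun := fun M =>
              have hM := (map_eq_one_iff_fin_two M.1).1 M.2.1
              (⟨M.1 0 0, hM.1⟩, ⟨M.1 0 1, hM.2.1⟩, ⟨M.1 1 0, hM.2.2.1⟩)
            invFun := fun x =>
              ⟨!![x.1.1, x.2.1.1; x.2.2.1, ↑(hA x.1).unit⁻¹ * (k + x.2.1.1 * x.2.2.1)],
                (map_eq_one_iff_fin_two _).2 ⟨x.1.2, x.2.1.2, x.2.2.2, by
                  simp [hA_inv, x.2.1.2, x.2.2.2, hk]⟩,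
                by rw [det_fin_two_of]; exact (sub_mul_eq_iff_eq_inv_mul (hA x.1)).2 rfl⟩
            left_inv := fun M => Subtype.ext <| by
              have hD := (sub_mul_eq_iff_eq_inv_mul
                (hA ⟨M.1 0 0, ((map_eq_one_iff_fin_two M.1).1 M.2.1).1⟩)).1
                ((det_fin_two M.1).symm.trans M.2.2)
              dsimp only
              rw [← hD]
              exact (eta_fin_two M.1).symm
            right_inv := fun _ => rfl }
      _ = Nat.card {x // r x = 0} ^ 3 := by
        rw [Nat.card_prod, Nat.card_prod, hunit]
        ring
  · refine @Nat.card_of_isEmpty _ ⟨fun ⟨M, hM, hdet⟩ => hk ?_⟩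
    rw [← hdet, RingHom.map_det, RingHom.mapMatrix_apply, hM, det_one]

end ResidueField

theorem natCard_GL_two_map_ne_one_det_eq {R F : Type*} [CommRing R] [Fintype R] [CommRing F]
    [Nontrivial F] [Fintype F] [DecidableEq F] {r : R →+* F} (hsurj : Function.Surjective r)
    (hr : ∀ x, r x ≠ 0 → IsUnit x) {k : R} (hk : IsUnit k) :
    Nat.card {M : GL (Fin 2) R //
      GeneralLinearGroup.map r M ≠ 1 ∧ (M : Matrix (Fin 2) (Fin 2) R).det = k} =
      if r k = 1 then Nat.card {x // r x = 0} ^ 3 * (Nat.card F ^ 3 - Nat.card F - 1)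
      else Nat.card {x // r x = 0} ^ 3 * (Nat.card F ^ 3 - Nat.card F) := by
  have hmap (M : GL (Fin 2) R) :
      GeneralLinearGroup.map r M = 1 ↔ (M : Matrix (Fin 2) (Fin 2) R).map r = 1 :=
    Units.ext_iff
  set n := Nat.card {x // r x = 0}
  set q := Nat.card F
  have hR : Nat.card R = q * n := natCard_eq_natCard_mul_natCard_ker hsurj
  have hcount : q * n * ((q * n) ^ 2 - n ^ 2) = n ^ 3 * (q ^ 3 - q) := by
    rw [Nat.mul_sub, Nat.mul_sub]
    ring_nf
  rw [Nat.card_congr (Equiv.subtypeEquivRight fun M => by rw [Ne, hmap]),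
    natCard_GL_subtype_det_eq hk fun M => M.map r ≠ 1, natCard_subtype_not_and,
    natCard_det_eq r hr hk, natCard_map_eq_one_det_eq r hr k, hR, hcount]
  split_ifs
  · rw [Nat.mul_sub_one]
  · rw [Nat.sub_zero]

theorem ZMod.isUnit_of_castHom_ne_zero {p a : ℕ} (hp : p.Prime) (ha : a ≠ 0) {x : ZMod (p ^ a)}
    (hx : ZMod.castHom (dvd_pow_self p ha) (ZMod p) x ≠ 0) : IsUnit x := by
  have : NeZero (p ^ a) := ⟨pow_ne_zero a hp.ne_zero⟩
  obtain ⟨m, rfl⟩ := ZMod.natCast_zmod_surjective x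
  rw [map_natCast, Ne, ZMod.natCast_eq_zero_iff] at hx
  exact (ZMod.isUnit_natCast_iff_not_dvd_pow hp (Nat.pos_of_ne_zero ha)).2 hx

theorem ZMod.intCast_ne_zero_of_isCoprime {p : ℕ} (hp : p.Prime) {k : ℤ}
    (hk : IsCoprime k (p : ℤ)) : (k : ZMod p) ≠ 0 := fun h =>
  (Nat.prime_iff_prime_int.mp hp).not_isUnit <|
    hk.symm.isUnit_of_dvd ((ZMod.intCast_zmod_eq_zero_iff_dvd k p).1 h)

/-- Count of `M ∈ GL₂(ℤ/ℓᵃℤ)` with `M ≢ I (mod ℓ)` and `det M ≡ k (mod ℓᵃ)`. -/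
theorem stmt1 (ℓ : ℕ) (hℓ : ℓ.Prime) (a : ℕ) (ha : 1 ≤ a) (k : ℤ)
    (hk : IsCoprime k (ℓ : ℤ)) :
    Nat.card {M : GL (Fin 2) (ZMod (ℓ ^ a)) //
      Matrix.GeneralLinearGroup.map
        (ZMod.castHom (dvd_pow_self ℓ (Nat.one_le_iff_ne_zero.mp ha)) (ZMod ℓ)) M ≠ 1 ∧
      (M : Matrix (Fin 2) (Fin 2) (ZMod (ℓ ^ a))).det = (k : ZMod (ℓ ^ a))} =
      if (k : ZMod ℓ) = 1 then ℓ ^ (3 * (a - 1)) * (ℓ ^ 3 - ℓ - 1)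
      else ℓ ^ (3 * (a - 1)) * (ℓ ^ 3 - ℓ) := by
  have : NeZero ℓ := ⟨hℓ.ne_zero⟩
  have : Fact (1 < ℓ) := ⟨hℓ.one_lt⟩
  have : NeZero (ℓ ^ a) := ⟨pow_ne_zero a hℓ.ne_zero⟩
  set r := ZMod.castHom (dvd_pow_self ℓ (Nat.one_le_iff_ne_zero.mp ha)) (ZMod ℓ)
  have hsurj : Function.Surjective r := ZMod.castHom_surjective _
  have hr (x) : r x ≠ 0 → IsUnit x :=
    ZMod.isUnit_of_castHom_ne_zero hℓ (Nat.one_le_iff_ne_zero.mp ha)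
  have hk_unit : IsUnit (k : ZMod (ℓ ^ a)) :=
    hr _ (by rw [map_intCast]; exact ZMod.intCast_ne_zero_of_isCoprime hℓ hk)
  have hker : Nat.card {x // r x = 0} = ℓ ^ (a - 1) := by
    have h := natCard_eq_natCard_mul_natCard_ker hsurj
    rw [Nat.card_zmod, Nat.card_zmod] at h
    refine Nat.eq_of_mul_eq_mul_left hℓ.pos (h.symm.trans ?_)
    rw [← pow_succ', Nat.sub_add_cancel ha]
  rw [natCard_GL_two_map_ne_one_det_eq hsurj hr hk_unit, hker, map_intCast, Nat.card_zmod,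
    ← pow_mul']
end

section
/- Let ℓ be an odd prime, d ∈ (ℤ/ℓℤ)ˣ, and t ∈ ℤ/ℓℤ. The number of matrices M ∈ GL₂(ℤ/ℓℤ) with det M = d and tr M = t equals ℓ² + ℓ·(the Legendre symbol of t²−4d modulo ℓ). -/
section aux

variable {F : Type*} [Field F] [Fintype F] [DecidableEq F]

lemma aux_card_mul_eq_ne_zero (k : F) (hk : k ≠ 0) :
    Nat.card {bc : F × F // bc.1 * bc.2 = k} = Fintype.card F - 1 := by
  have e : {bc : F × F // bc.1 * bc.2 = k} ≃ Fˣ :=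
  { toFun := fun bc => Units.mk0 bc.1.1 (fun h => hk (by rw [← bc.2, h, zero_mul]))
    invFun := fun u => ⟨((u : F), (u⁻¹ : Fˣ) * k), by
      rw [← mul_assoc, Units.mul_inv, one_mul]⟩
    left_inv := fun bc => by
      obtain ⟨⟨b, c⟩, hbc⟩ := bc
      have hb : b ≠ 0 := fun h => hk (by rw [← hbc, h, zero_mul])
      apply Subtype.ext
      apply Prod.ext
      · rfl
      · show ((Units.mk0 b hb)⁻¹ : Fˣ) * k = c
        rw [Units.val_inv_eq_inv_val, Units.val_mk0, ← hbc, inv_mul_cancel_left₀ hb]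
    right_inv := fun u => by
      apply Units.ext
      rfl }
  rw [Nat.card_congr e, Nat.card_eq_fintype_card, Fintype.card_units]

lemma aux_card_mul_eq_zero :
    Nat.card {bc : F × F // bc.1 * bc.2 = (0 : F)} = 2 * Fintype.card F - 1 := by
  have e : {bc : F × F // bc.1 * bc.2 = (0 : F)} ≃ F ⊕ {c : F // c ≠ 0} :=
  { toFun := fun bc => if h : bc.1.2 = 0 then Sum.inl bc.1.1 else Sum.inr ⟨bc.1.2, h⟩
    invFun := fun s => match s with
      | Sum.inl b => ⟨(b, 0), mul_zero b⟩
      | Sum.inr c => ⟨(0, c.1), zero_mul _⟩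
    left_inv := fun bc => by
      rcases bc with ⟨⟨b, c⟩, h⟩
      by_cases hc : c = 0
      · simp [hc]
      · have hb : b = 0 := (mul_eq_zero.mp h).resolve_right hc
        simp [hc, hb]
    right_inv := fun s => by
      match s with
      | Sum.inl b => simp
      | Sum.inr c => simp [c.2] }
  rw [Nat.card_congr e, Nat.card_eq_fintype_card, Fintype.card_sum,
    Fintype.card_congr (unitsEquivNeZero (G₀ := F)).symm, Fintype.card_units]
  have h1 : 1 ≤ Fintype.card F := Fintype.card_pos
  omega

end aux

/-- For an odd prime `ℓ`, the number of `M ∈ GL₂(ℤ/ℓℤ)` with `det M = d` and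
`tr M = t` equals `ℓ² + ℓ·((t²−4d)/ℓ)` (Legendre symbol, given by the quadratic
character of `ZMod ℓ`). -/
theorem stmt2 (ℓ : ℕ) [Fact ℓ.Prime] (hodd : ℓ ≠ 2) (d : (ZMod ℓ)ˣ) (t : ZMod ℓ) :
    (Nat.card {M : GL (Fin 2) (ZMod ℓ) //
        (M : Matrix (Fin 2) (Fin 2) (ZMod ℓ)).det = (d : ZMod ℓ) ∧
        (M : Matrix (Fin 2) (Fin 2) (ZMod ℓ)).trace = t} : ℤ) =
      (ℓ : ℤ) ^ 2 + (ℓ : ℤ) * quadraticChar (ZMod ℓ) (t ^ 2 - 4 * (d : ZMod ℓ)) := by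
  have hp : ℓ.Prime := Fact.out
  have hd : (d : ZMod ℓ) ≠ 0 := d.ne_zero
  have h2 : (2 : ZMod ℓ) ≠ 0 := by
    intro h
    have hdvd : ℓ ∣ 2 := (ZMod.natCast_eq_zero_iff 2 ℓ).mp (by exact_mod_cast h)
    exact hodd ((Nat.prime_dvd_prime_iff_eq hp Nat.prime_two).mp hdvd)
  -- Step 1: pass from GL to matrices
  have e1 : {M : GL (Fin 2) (ZMod ℓ) //
        (M : Matrix (Fin 2) (Fin 2) (ZMod ℓ)).det = (d : ZMod ℓ) ∧
        (M : Matrix (Fin 2) (Fin 2) (ZMod ℓ)).trace = t} ≃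
      {A : Matrix (Fin 2) (Fin 2) (ZMod ℓ) // A.det = (d : ZMod ℓ) ∧ A.trace = t} :=
  { toFun := fun M => ⟨M.1, M.2⟩
    invFun := fun A => ⟨Matrix.GeneralLinearGroup.mkOfDetNeZero A.1
      (by rw [A.2.1]; exact hd), A.2⟩
    left_inv := fun M => Subtype.ext (Units.ext rfl)
    right_inv := fun A => rfl }
  -- Step 2: pass from matrices to triples
  have e2 : {A : Matrix (Fin 2) (Fin 2) (ZMod ℓ) // A.det = (d : ZMod ℓ) ∧ A.trace = t} ≃
      {p : ZMod ℓ × ZMod ℓ × ZMod ℓ //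
        p.2.1 * p.2.2 = p.1 * (t - p.1) - (d : ZMod ℓ)} :=
  { toFun := fun A => ⟨(A.1 0 0, A.1 0 1, A.1 1 0), by
      obtain ⟨hdet, htr⟩ := A.2
      rw [Matrix.det_fin_two] at hdet
      rw [Matrix.trace_fin_two] at htr
      have h11 : A.1 1 1 = t - A.1 0 0 := by linear_combination htr
      rw [h11] at hdet
      linear_combination -hdet⟩
    invFun := fun p => ⟨!![p.1.1, p.1.2.1; p.1.2.2, t - p.1.1], by
      constructor
      · rw [Matrix.det_fin_two_of]
        linear_combination -p.2
      · rw [Matrix.trace_fin_two]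
        simp⟩
    left_inv := fun A => by
      apply Subtype.ext
      have htr := A.2.2
      rw [Matrix.trace_fin_two] at htr
      have h11 : A.1 1 1 = t - A.1 0 0 := by linear_combination htr
      ext i j
      fin_cases i <;> fin_cases j <;> simp [h11]
    right_inv := fun p => Subtype.ext (by simp) }
  -- Step 3: to a sigma type
  have e3 := Equiv.subtypeProdEquivSigmaSubtype
    (fun (a : ZMod ℓ) (bc : ZMod ℓ × ZMod ℓ) => bc.1 * bc.2 = a * (t - a) - (d : ZMod ℓ))
  have hcard : (Nat.card {M : GL (Fin 2) (ZMod ℓ) //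
        (M : Matrix (Fin 2) (Fin 2) (ZMod ℓ)).det = (d : ZMod ℓ) ∧
        (M : Matrix (Fin 2) (Fin 2) (ZMod ℓ)).trace = t} : ℤ) =
      ∑ a : ZMod ℓ, (Nat.card {bc : ZMod ℓ × ZMod ℓ //
        bc.1 * bc.2 = a * (t - a) - (d : ZMod ℓ)} : ℤ) := by
    rw [Nat.card_congr ((e1.trans e2).trans e3), Nat.card_eq_fintype_card,
      Fintype.card_sigma]
    push_cast
    refine Finset.sum_congr rfl fun a _ => ?_
    rw [Nat.card_eq_fintype_card]
  rw [hcard]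
  -- Step 4: per-fiber count
  have key : ∀ a : ZMod ℓ, (Nat.card {bc : ZMod ℓ × ZMod ℓ //
      bc.1 * bc.2 = a * (t - a) - (d : ZMod ℓ)} : ℤ) =
      ((ℓ : ℤ) - 1) + (if a * (t - a) - (d : ZMod ℓ) = 0 then (ℓ : ℤ) else 0) := by
    intro a
    by_cases hk : a * (t - a) - (d : ZMod ℓ) = 0
    · rw [if_pos hk, hk, aux_card_mul_eq_zero, ZMod.card]
      have : 1 ≤ ℓ := hp.one_lt.le.trans' (by norm_num)
      push_cast [Nat.cast_sub (by omega : 1 ≤ 2 * ℓ)]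
      ring
    · rw [if_neg hk, aux_card_mul_eq_ne_zero _ hk, ZMod.card,
        Nat.cast_sub hp.one_lt.le]
      push_cast
      ring
  simp only [key]
  rw [Finset.sum_add_distrib, Finset.sum_const, Finset.card_univ, ZMod.card]
  -- Step 5: count the roots of the quadratic
  have hroot : (∑ a : ZMod ℓ, (if a * (t - a) - (d : ZMod ℓ) = 0 then (ℓ : ℤ) else 0)) =
      (ℓ : ℤ) * (quadraticChar (ZMod ℓ) (t ^ 2 - 4 * (d : ZMod ℓ)) + 1) := by
    rw [← Finset.sum_filter]
    rw [Finset.sum_const]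
    have hsq := quadraticChar_card_sqrts
      (by rw [ZMod.ringChar_zmod_n]; exact hodd) (t ^ 2 - 4 * (d : ZMod ℓ))
    have hbij : (Finset.univ.filter
        (fun a : ZMod ℓ => a * (t - a) - (d : ZMod ℓ) = 0)).card =
        ({x : ZMod ℓ | x ^ 2 = t ^ 2 - 4 * (d : ZMod ℓ)}.toFinset).card := by
      apply Finset.card_bij' (fun a _ => 2 * a - t)
        (fun x _ => (x + t) * (2 : ZMod ℓ)⁻¹)
      · intro a ha
        rw [Finset.mem_filter] at ha
        rw [Set.mem_toFinset, Set.mem_setOf_eq]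
        linear_combination (-4 : ZMod ℓ) * ha.2
      · intro x hx
        rw [Set.mem_toFinset, Set.mem_setOf_eq] at hx
        rw [Finset.mem_filter]
        refine ⟨Finset.mem_univ _, ?_⟩
        field_simp
        linear_combination -hx
      · intro a ha
        field_simp
        ring
      · intro x hx
        field_simp
        ring
    rw [nsmul_eq_mul, hbij, hsq]
    ring
  rw [hroot, nsmul_eq_mul]
  push_cast
  ring
end

section
/- Fix a prime ℓ, a positive integer a, and an integer k coprime to ℓ. The number of matrices M ∈ GL₂(ℤ/ℓᵃℤ) with det(M−I) ≢ 0 (mod ℓ) and det M ≡ k (mod ℓᵃ) equals ℓ^{3(a−1)}·(ℓ³−ℓ²−ℓ) if k ≡ 1 (mod ℓ), and ℓ^{3(a−1)}·(ℓ³−ℓ²−2ℓ) if k ≢ 1 (mod ℓ). -/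
/-!
Write `M = !![p, q; r, s]`. Every matrix of determinant `k̄` over `𝔽_ℓ` has exactly
`ℓ ^ (3 (a - 1))` lifts of determinant `k` over `ℤ/ℓᵃℤ`: choose lifts of `p, q, r` and solve
for `s` when `p` is a unit; otherwise `qr = ps - k` is a unit, so `q` is one, and one solves
for `r` instead. So it suffices to count over `𝔽_ℓ`.

Over `𝔽_ℓ` there are `ℓ³ - ℓ` matrices of determinant `c ≠ 0`. As
`det (M - 1) = det M - tr M + 1`, the excluded ones are those of trace `c + 1`, i.e. the
solutions of `s = c + 1 - p`, `qr = -(p - 1)(p - c)`; since `xy = d` has `ℓ - 1` solutions,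
or `2ℓ - 1` when `d = 0`, there are `ℓ² - ℓ + ℓ · #{1, c}` of them.
-/

open Finset

theorem Matrix.sum_fin_two {R M : Type*} [Fintype R] [AddCommMonoid M]
    (f : Matrix (Fin 2) (Fin 2) R → M) :
    ∑ A, f A = ∑ p, ∑ q, ∑ r, ∑ s, f !![p, q; r, s] := by
  let e : Matrix (Fin 2) (Fin 2) R ≃ (R × R) × (R × R) :=
    (Matrix.of.symm.trans (Equiv.arrowCongr (Equiv.refl _) (finTwoArrowEquiv R))).trans
      (finTwoArrowEquiv (R × R))
  simp only [← e.symm.sum_comp, Fintype.sum_prod_type]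
  congr! with p q r s
  rw [Matrix.eta_fin_two (e.symm _)]
  rfl

theorem Matrix.map_fin_two {α β : Type*} (f : α → β) (p q r s : α) :
    (!![p, q; r, s]).map f = !![f p, f q; f r, f s] := by
  rw [Matrix.eta_fin_two (Matrix.map _ _)]
  simp

theorem Matrix.det_sub_one_fin_two {R : Type*} [CommRing R] (A : Matrix (Fin 2) (Fin 2) R) :
    (A - 1).det = A.det - A.trace + 1 := by
  simp only [det_fin_two, trace_fin_two, sub_apply, one_apply_eq, one_apply_ne, ne_eq,
    zero_ne_one, one_ne_zero, not_false_eq_true, sub_zero]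
  ring

theorem Fintype.sum_ite_eq_add {α M : Type*} [Fintype α] [DecidableEq α] [AddCommMonoid M]
    (x₀ : α) (a b : M) : ∑ x, (if x = x₀ then a else b) = a + (Fintype.card α - 1) • b := by
  rw [sum_ite, filter_eq', filter_ne', sum_const, sum_const, if_pos (mem_univ _), card_singleton,
    card_erase_of_mem (mem_univ _), card_univ, one_smul]

theorem sum_comp_eq_card_smul {α β M : Type*} [Fintype α] [Fintype β] [DecidableEq β]
    [AddCommMonoid M] (g : α → β) {μ : ℕ} (hμ : ∀ y, #{x | g x = y} = μ) (f : β → M) :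
    ∑ x, f (g x) = μ • ∑ y, f y := by
  rw [← sum_fiberwise univ g, smul_sum]
  refine sum_congr rfl fun y _ => ?_
  rw [sum_congr rfl fun x hx => congrArg f (mem_filter.1 hx).2, sum_const, hμ]

section SumDetSlice

variable {A M : Type*} [CommRing A] [Fintype A] [DecidableEq A] [AddCommMonoid M]

def sumDetSlice (k p : A) (f : Matrix (Fin 2) (Fin 2) A → M) : M :=
  ∑ q, ∑ r, ∑ s, if p * s - q * r = k then f !![p, q; r, s] else 0

theorem sum_det_eq_sum_sumDetSlice (k : A) (f : Matrix (Fin 2) (Fin 2) A → M) :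
    ∑ B with B.det = k, f B = ∑ p, sumDetSlice k p f := by
  rw [sum_filter, Matrix.sum_fin_two]
  simp only [Matrix.det_fin_two_of, sumDetSlice]

theorem sumDetSlice_of_isUnit {k p : A} (hp : IsUnit p) (f : Matrix (Fin 2) (Fin 2) A → M) :
    sumDetSlice k p f = ∑ q, ∑ r, f !![p, q; r, Ring.inverse p * (k + q * r)] := by
  obtain ⟨u, rfl⟩ := hp
  refine sum_congr rfl fun q _ => sum_congr rfl fun r _ => ?_
  have hs (s : A) : ↑u * s - q * r = k ↔ ↑u⁻¹ * (k + q * r) = s := by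
    rw [Units.inv_mul_eq_iff_eq_mul, sub_eq_iff_eq_add, eq_comm]
  simp only [hs, Fintype.sum_ite_eq, Ring.inverse_unit]

theorem sumDetSlice_of_forall_isUnit_sub {k p : A} (hp : ∀ s, IsUnit (p * s - k))
    (f : Matrix (Fin 2) (Fin 2) A → M) :
    sumDetSlice k p f =
      ∑ q, ∑ s, if IsUnit q then f !![p, q; Ring.inverse q * (p * s - k), s] else 0 := by
  refine sum_congr rfl fun q _ => ?_
  rw [sum_comm]
  refine sum_congr rfl fun s _ => ?_
  split_ifs with hq
  · obtain ⟨u, rfl⟩ := hq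
    have hr (r : A) : p * s - ↑u * r = k ↔ ↑u⁻¹ * (p * s - k) = r := by
      rw [Units.inv_mul_eq_iff_eq_mul, sub_eq_iff_eq_add, sub_eq_iff_eq_add']
    simp only [hr, Fintype.sum_ite_eq, Ring.inverse_unit]
  · refine sum_eq_zero fun r _ => if_neg fun h => hq ?_
    have hqr : q * r = p * s - k := by rw [← h]; ring
    exact isUnit_of_mul_isUnit_left (hqr ▸ hp s)

theorem card_det_eq_and_trace_eq (c t : A) :
    #{B : Matrix (Fin 2) (Fin 2) A | B.det = c ∧ B.trace = t} =
      ∑ p, #{v : A × A | v.1 * v.2 = p * (t - p) - c} := by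
  rw [card_filter, Matrix.sum_fin_two]
  refine sum_congr rfl fun p _ => ?_
  rw [card_filter, Fintype.sum_prod_type]
  refine sum_congr rfl fun q _ => sum_congr rfl fun r _ => ?_
  have hs (s : A) :
      (p * s - q * r = c ∧ p + s = t) ↔ (t - p = s ∧ q * r = p * (t - p) - c) := by
    constructor
    · rintro ⟨hdet, rfl⟩
      exact ⟨by ring, by rw [← hdet]; ring⟩
    · rintro ⟨rfl, hqr⟩
      exact ⟨by rw [hqr]; ring, by ring⟩
  simp only [Matrix.det_fin_two_of, Matrix.trace_fin_two_of, hs, ite_and, Fintype.sum_ite_eq]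

end SumDetSlice

section FiniteField

variable {F : Type*} [Field F] [Fintype F] [DecidableEq F]

theorem card_mul_eq_add_one (d : F) :
    #{v : F × F | v.1 * v.2 = d} + 1 =
      Fintype.card F + if d = 0 then Fintype.card F else 0 := by
  have hrow (x : F) :
      #{y | x * y = d} = if x = 0 then (if d = 0 then Fintype.card F else 0) else 1 := by
    split_ifs with hx hd
    · simp [hx, hd]
    · simp [hx, Ne.symm hd]
    · simp_rw [← eq_inv_mul_iff_mul_eq₀ hx, filter_eq', mem_univ, if_true, card_singleton]
  rw [card_filter, Fintype.sum_prod_type]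
  simp only [← card_filter, hrow]
  rw [Fintype.sum_ite_eq_add, smul_eq_mul, mul_one]
  have := Fintype.card_pos (α := F)
  split_ifs <;> omega

theorem card_det_eq {c : F} (hc : c ≠ 0) :
    #{B : Matrix (Fin 2) (Fin 2) F | B.det = c} + Fintype.card F = Fintype.card F ^ 3 := by
  have hslice (p : F) : sumDetSlice c p (fun _ => 1) =
      if p = 0 then (Fintype.card F - 1) * Fintype.card F else Fintype.card F ^ 2 := by
    split_ifs with hp
    · subst hp
      rw [sumDetSlice_of_forall_isUnit_sub fun s => by simpa using hc]
      simp [isUnit_iff_ne_zero, Fintype.sum_ite_eq_add]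
    · rw [sumDetSlice_of_isUnit (isUnit_iff_ne_zero.2 hp)]
      simp [sq]
  rw [card_eq_sum_ones, sum_det_eq_sum_sumDetSlice]
  simp only [hslice]
  rw [Fintype.sum_ite_eq_add, smul_eq_mul]
  obtain ⟨n, hn⟩ := Nat.exists_eq_add_of_le' (Fintype.card_pos (α := F))
  rw [hn, Nat.add_sub_cancel]
  ring

theorem card_det_eq_and_trace_eq_add_one (c : F) :
    #{B : Matrix (Fin 2) (Fin 2) F | B.det = c ∧ B.trace = c + 1} + Fintype.card F =
      Fintype.card F ^ 2 + #{1, c} * Fintype.card F := by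
  have hroots : ({p | p * (c + 1 - p) - c = 0} : Finset F) = {1, c} := by
    ext p
    rw [mem_filter, show p * (c + 1 - p) - c = -((p - 1) * (p - c)) by ring, neg_eq_zero,
      mul_eq_zero, sub_eq_zero, sub_eq_zero]
    simp
  calc _ = ∑ p : F, (#{v : F × F | v.1 * v.2 = p * (c + 1 - p) - c} + 1) := by
        rw [card_det_eq_and_trace_eq, sum_add_distrib, sum_const, card_univ, smul_eq_mul, mul_one]
    _ = ∑ p : F, (Fintype.card F + if p * (c + 1 - p) - c = 0 then Fintype.card F else 0) := by
        simp only [card_mul_eq_add_one]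
    _ = _ := by rw [sum_add_distrib, ← sum_filter, hroots]; simp [sq]

theorem card_det_eq_and_det_sub_one_ne_zero {c : F} (hc : c ≠ 0) :
    #{B : Matrix (Fin 2) (Fin 2) F | B.det = c ∧ (B - 1).det ≠ 0} =
      Fintype.card F ^ 3 - Fintype.card F ^ 2 - #{1, c} * Fintype.card F := by
  have hsplit := card_filter_add_card_filter_not
    (s := {B : Matrix (Fin 2) (Fin 2) F | B.det = c}) (p := fun B => (B - 1).det ≠ 0)
  simp only [filter_filter] at hsplit
  have htrace : #{B : Matrix (Fin 2) (Fin 2) F | B.det = c ∧ ¬(B - 1).det ≠ 0} =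
      #{B : Matrix (Fin 2) (Fin 2) F | B.det = c ∧ B.trace = c + 1} := by
    refine congrArg card (filter_congr fun B _ => ?_)
    rw [not_not, Matrix.det_sub_one_fin_two]
    exact and_congr_right fun hB => by rw [hB, sub_add_eq_add_sub, sub_eq_zero, eq_comm]
  have := card_det_eq hc
  have := card_det_eq_and_trace_eq_add_one c
  omega

end FiniteField

theorem map_ringInverse {R F : Type*} [Semiring R] [DivisionRing F] (π : R →+* F)
    (hunit : ∀ x, IsUnit x ↔ π x ≠ 0) (x : R) : π (Ring.inverse x) = (π x)⁻¹ := by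
  by_cases hx : IsUnit x
  · exact eq_inv_of_mul_eq_one_right (by rw [← map_mul, Ring.mul_inverse_cancel x hx, map_one])
  · rw [Ring.inverse_non_unit x hx, map_zero, not_not.1 (mt (hunit x).2 hx), inv_zero]

section Reduction

variable {R F M : Type*} [CommRing R] [Fintype R] [DecidableEq R] [Field F] [Fintype F]
  [DecidableEq F] [AddCommMonoid M] (π : R →+* F) (hunit : ∀ x, IsUnit x ↔ π x ≠ 0)
  {μ : ℕ} (hμ : ∀ y, #{x | π x = y} = μ)
include hunit hμ

theorem sumDetSlice_map {k : R} (hk : IsUnit k) (f : Matrix (Fin 2) (Fin 2) F → M) (p : R) :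
    sumDetSlice k p (fun A => f (A.map π)) = μ ^ 2 • sumDetSlice (π k) (π p) f := by
  have hsum₂ (g : F → F → M) : ∑ x, ∑ y, g (π x) (π y) = μ ^ 2 • ∑ x, ∑ y, g x y := by
    simp only [sum_comp_eq_card_smul π hμ (g (π _)), ← smul_sum]
    rw [sum_comp_eq_card_smul π hμ (fun x => ∑ y, g x y), smul_smul, sq]
  by_cases hp : IsUnit p
  · rw [sumDetSlice_of_isUnit hp, sumDetSlice_of_isUnit (hp.map π)]
    simp only [Matrix.map_fin_two, map_mul, map_add, map_ringInverse π hunit,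
      Ring.inverse_eq_inv']
    exact hsum₂ fun y z => f !![π p, y; z, (π p)⁻¹ * (π k + y * z)]
  · have hp' : π p = 0 := not_not.1 (mt (hunit p).2 hp)
    have hk' : π k ≠ 0 := (hunit k).1 hk
    rw [sumDetSlice_of_forall_isUnit_sub (fun s => (hunit _).2 (by simp [hp', hk'])),
      sumDetSlice_of_forall_isUnit_sub (fun s => isUnit_iff_ne_zero.2 (by simp [hp', hk']))]
    simp only [Matrix.map_fin_two, map_mul, map_sub, map_ringInverse π hunit,
      Ring.inverse_eq_inv', hunit, isUnit_iff_ne_zero, hp']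
    exact hsum₂ fun y w => if y ≠ 0 then f !![0, y; y⁻¹ * (0 * w - π k), w] else 0

theorem sum_det_eq_map {k : R} (hk : IsUnit k) (f : Matrix (Fin 2) (Fin 2) F → M) :
    ∑ A : Matrix (Fin 2) (Fin 2) R with A.det = k, f (A.map π) =
      μ ^ 3 • ∑ B with B.det = π k, f B := by
  rw [sum_det_eq_sum_sumDetSlice k (fun A => f (A.map π)), sum_det_eq_sum_sumDetSlice]
  simp only [sumDetSlice_map π hunit hμ hk]
  rw [sum_comp_eq_card_smul π hμ (fun x => μ ^ 2 • sumDetSlice (π k) x f), ← smul_sum,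
    smul_smul, ← pow_succ']

omit [AddCommMonoid M] in
theorem card_det_eq_and_map {k : R} (hk : IsUnit k) (P : Matrix (Fin 2) (Fin 2) F → Prop)
    [DecidablePred P] :
    #{A : Matrix (Fin 2) (Fin 2) R | A.det = k ∧ P (A.map π)} =
      μ ^ 3 * #{B | B.det = π k ∧ P B} := by
  rw [← filter_filter, ← filter_filter, card_filter, card_filter, ← smul_eq_mul]
  exact sum_det_eq_map π hunit hμ hk fun B => if P B then 1 else 0

end Reduction

theorem card_fiber_mul_card_of_surjective {G H Φ : Type*} [AddGroup G] [Fintype G] [AddGroup H]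
    [Fintype H] [DecidableEq H] [FunLike Φ G H] [AddMonoidHomClass Φ G H] (f : Φ)
    (hf : Function.Surjective f) (y : H) :
    #{x | f x = y} * Fintype.card H = Fintype.card G := by
  calc #{x | f x = y} * Fintype.card H = ∑ z, #{x | f x = z} := by
        rw [sum_congr rfl fun z _ => AddMonoidHom.card_fiber_eq_of_mem_range f (hf z) (hf y),
          sum_const, card_univ, smul_eq_mul, mul_comm]
    _ = Fintype.card G := (card_eq_sum_card_fiberwise fun x _ => mem_univ (f x)).symm

theorem ZMod.isUnit_iff_castHom_ne_zero {ℓ a : ℕ} [hℓ : Fact ℓ.Prime] (ha : a ≠ 0)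
    (x : ZMod (ℓ ^ a)) : IsUnit x ↔ ZMod.castHom (dvd_pow_self ℓ ha) (ZMod ℓ) x ≠ 0 := by
  rw [← ZMod.natCast_zmod_val x,
    ZMod.isUnit_natCast_iff_not_dvd_pow hℓ.out (Nat.pos_of_ne_zero ha), map_natCast, Ne,
    ZMod.natCast_eq_zero_iff]

theorem ZMod.card_castHom_fiber {ℓ a : ℕ} [hℓ : Fact ℓ.Prime] (ha : a ≠ 0) (y : ZMod ℓ) :
    #{x : ZMod (ℓ ^ a) | ZMod.castHom (dvd_pow_self ℓ ha) (ZMod ℓ) x = y} = ℓ ^ (a - 1) := by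
  have h := card_fiber_mul_card_of_surjective _ (ZMod.castHom_surjective (dvd_pow_self ℓ ha)) y
  rw [ZMod.card, ZMod.card] at h
  refine Nat.eq_of_mul_eq_mul_right hℓ.out.pos (h.trans ?_)
  rw [← pow_succ, Nat.sub_add_cancel (Nat.one_le_iff_ne_zero.2 ha)]

theorem IsCoprime.intCast_zmod_ne_zero {k : ℤ} {n : ℕ} [Nontrivial (ZMod n)]
    (hk : IsCoprime k (n : ℤ)) : (k : ZMod n) ≠ 0 := by
  have h := hk.map (Int.castRingHom (ZMod n))
  rw [map_natCast, ZMod.natCast_self] at h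
  exact (isCoprime_zero_right.mp h).ne_zero

theorem Matrix.GeneralLinearGroup.natCard_and_det_eq {n R : Type*} [Fintype n] [DecidableEq n]
    [CommRing R] (P : Matrix n n R → Prop) {k : R} (hk : IsUnit k) :
    Nat.card {M : GL n R // P M ∧ (M : Matrix n n R).det = k} =
      Nat.card {A : Matrix n n R // P A ∧ A.det = k} :=
  Nat.card_congr
    { toFun := fun M => ⟨M.1, M.2⟩
      invFun := fun A => ⟨((Matrix.isUnit_iff_isUnit_det A.1).2 (by rw [A.2.2]; exact hk)).unit,
        A.2⟩
      left_inv := fun _ => Subtype.ext (Units.ext rfl)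
      right_inv := fun _ => rfl }

/-- Count of `M ∈ GL₂(ℤ/ℓᵃℤ)` with `det(M − I) ≢ 0 (mod ℓ)` and `det M ≡ k (mod ℓᵃ)`. -/
theorem stmt4 (ℓ : ℕ) (hℓ : ℓ.Prime) (a : ℕ) (ha : 1 ≤ a) (k : ℤ)
    (hk : IsCoprime k (ℓ : ℤ)) :
    Nat.card {M : GL (Fin 2) (ZMod (ℓ ^ a)) //
      ((Matrix.GeneralLinearGroup.map
          (ZMod.castHom (dvd_pow_self ℓ (Nat.one_le_iff_ne_zero.mp ha)) (ZMod ℓ)) M :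
            Matrix (Fin 2) (Fin 2) (ZMod ℓ)) - 1).det ≠ 0 ∧
      (M : Matrix (Fin 2) (Fin 2) (ZMod (ℓ ^ a))).det = (k : ZMod (ℓ ^ a))} =
      if (k : ZMod ℓ) = 1 then ℓ ^ (3 * (a - 1)) * (ℓ ^ 3 - ℓ ^ 2 - ℓ)
      else ℓ ^ (3 * (a - 1)) * (ℓ ^ 3 - ℓ ^ 2 - 2 * ℓ) := by
  have ha' : a ≠ 0 := Nat.one_le_iff_ne_zero.mp ha
  have : Fact ℓ.Prime := ⟨hℓ⟩
  set π := ZMod.castHom (dvd_pow_self ℓ ha') (ZMod ℓ)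
  have hunit := ZMod.isUnit_iff_castHom_ne_zero (ℓ := ℓ) ha'
  have hkℓ : (k : ZMod ℓ) ≠ 0 := hk.intCast_zmod_ne_zero
  have hk' : IsUnit (k : ZMod (ℓ ^ a)) := (hunit _).2 (by rwa [map_intCast])
  calc _ = Nat.card {A : Matrix (Fin 2) (Fin 2) (ZMod (ℓ ^ a)) //
          (A.map π - 1).det ≠ 0 ∧ A.det = k} :=
        Matrix.GeneralLinearGroup.natCard_and_det_eq (fun A => (A.map π - 1).det ≠ 0) hk'
    _ = #{A : Matrix (Fin 2) (Fin 2) (ZMod (ℓ ^ a)) | A.det = k ∧ (A.map π - 1).det ≠ 0} := by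
        rw [Nat.card_eq_fintype_card, Fintype.card_subtype]
        simp only [and_comm]
    _ = (ℓ ^ (a - 1)) ^ 3 *
          #{B : Matrix (Fin 2) (Fin 2) (ZMod ℓ) | B.det = k ∧ (B - 1).det ≠ 0} := by
        rw [card_det_eq_and_map π hunit (ZMod.card_castHom_fiber ha') hk'
          fun B => (B - 1).det ≠ 0, map_intCast]
    _ = _ := by
        rw [card_det_eq_and_det_sub_one_ne_zero hkℓ, ZMod.card, mul_comm 3, pow_mul]
        split_ifs with hk1
        · rw [hk1, pair_eq_singleton, card_singleton, one_mul]
        · rw [card_pair (Ne.symm hk1)]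
end

section
/- Let K be an imaginary quadratic field with ring of integers O_K, let ℓ be an odd rational prime unramified in K, and let a ≥ 1. For k an integer coprime to ℓ and g ∈ (O_K/ℓO_K)ˣ with Norm(g) ≡ k (mod ℓ), the number of elements g̃ ∈ (O_K/ℓᵃO_K)ˣ with g̃ ≡ g (mod ℓO_K) and Norm(g̃) ≡ k (mod ℓᵃ) equals ℓ^{a−1}. -/
open Polynomial Module

namespace Stmt6Aux

set_option linter.unusedSectionVars false

lemma charpoly_fin_two' {S : Type*} [CommRing S] (M : Matrix (Fin 2) (Fin 2) S) :
    M.charpoly = X ^ 2 - C M.trace * X + C M.det := by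
  rw [Matrix.charpoly, Matrix.det_fin_two, Matrix.trace_fin_two, Matrix.det_fin_two]
  simp [Matrix.charmatrix_apply]; ring

lemma zmod_down {m n : ℕ} (hmn : m ∣ n) {u v : ℤ} (h : (u : ZMod n) = v) :
    (u : ZMod m) = v := by
  rw [← sub_eq_zero, ← Int.cast_sub, ZMod.intCast_zmod_eq_zero_iff_dvd] at h ⊢
  exact dvd_trans (Int.natCast_dvd_natCast.mpr hmn) h

section cardfiber

/-- fiber of a surjective hom of finite additive groups -/
lemma card_fiber_mul {G H : Type*} [AddCommGroup G] [AddCommGroup H] [Finite G]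
    (f : G →+ H) (hf : Function.Surjective f) (c : H) :
    Nat.card {q : G // f q = c} * Nat.card H = Nat.card G := by
  have : Finite H := Finite.of_surjective f hf
  obtain ⟨q₀, hq₀⟩ := hf c
  have e : {q : G // f q = c} ≃ f.ker :=
    { toFun := fun q => ⟨q.1 - q₀, by simp [AddMonoidHom.mem_ker, map_sub, q.2, hq₀]⟩
      invFun := fun z => ⟨z.1 + q₀, by
        have := z.2
        rw [AddMonoidHom.mem_ker] at this
        simp [map_add, this, hq₀]⟩
      left_inv := fun q => by ext; simp
      right_inv := fun z => by ext; simp }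
  rw [Nat.card_congr e]
  have h1 : Nat.card G = Nat.card (G ⧸ f.ker) * Nat.card f.ker :=
    AddSubgroup.card_eq_card_quotient_mul_card_addSubgroup f.ker
  have h2 : Nat.card (G ⧸ f.ker) = Nat.card H :=
    Nat.card_congr (QuotientAddGroup.quotientKerEquivOfSurjective f hf).toEquiv
  rw [h1, h2, mul_comm]

end cardfiber

section
variable {R : Type*} [CommRing R] [IsDomain R] [CharZero R]
    [Module.Free ℤ R] [Module.Finite ℤ R]

/-- the symmetric bilinear form `B x y = T x * T y - T (x y)`. -/
noncomputable def Bf (x y : R) : ℤ :=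
  Algebra.trace ℤ R x * Algebra.trace ℤ R y - Algebra.trace ℤ R (x * y)

lemma Bf_eq (x t : R) :
    Bf x t = Algebra.trace ℤ R ((algebraMap ℤ R (Algebra.trace ℤ R x) - x) * t) := by
  rw [Bf, sub_mul, map_sub, ← Algebra.smul_def, map_smul, smul_eq_mul]

variable (hrk : Module.finrank ℤ R = 2)
include hrk

lemma quad_id (x : R) :
    x ^ 2 - (algebraMap ℤ R (Algebra.trace ℤ R x)) * x + algebraMap ℤ R (Algebra.norm ℤ x) = 0 := by
  classical
  let b : Basis (Fin 2) ℤ R := (Module.Free.chooseBasis ℤ R).reindex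
    (Fintype.equivFinOfCardEq (by rw [← Module.finrank_eq_card_chooseBasisIndex, hrk]))
  have hN : Algebra.norm ℤ x = (Algebra.leftMulMatrix b x).det := Algebra.norm_eq_matrix_det b x
  have hT : Algebra.trace ℤ R x = (Algebra.leftMulMatrix b x).trace :=
    Algebra.trace_eq_matrix_trace b x
  have h := Matrix.aeval_self_charpoly (Algebra.leftMulMatrix b x)
  rw [charpoly_fin_two'] at h
  have h2 : Polynomial.aeval x (X ^ 2 - C (Algebra.trace ℤ R x) * X + C (Algebra.norm ℤ x)) = 0 := by
    apply Algebra.leftMulMatrix_injective b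
    rw [map_zero, ← Polynomial.aeval_algHom_apply, hN, hT]
    exact h
  simpa using h2

lemma trace_int (c : ℤ) : Algebra.trace ℤ R (algebraMap ℤ R c) = 2 * c := by
  rw [Algebra.trace_algebraMap, hrk]; ring

lemma polar_elem (x y : R) :
    algebraMap ℤ R (Algebra.norm ℤ (x + y) - Algebra.norm ℤ x - Algebra.norm ℤ y)
      = algebraMap ℤ R (Algebra.trace ℤ R x) * y + algebraMap ℤ R (Algebra.trace ℤ R y) * x
        - 2 * (x * y) := by
  have hxy := quad_id hrk (x + y)
  have hx := quad_id hrk x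
  have hy := quad_id hrk y
  rw [map_add] at hxy
  push_cast [map_sub, map_add] at *
  linear_combination hxy - hx - hy

lemma norm_add' (x y : R) :
    Algebra.norm ℤ (x + y) = Algebra.norm ℤ x + Algebra.norm ℤ y + Bf x y := by
  have h := polar_elem hrk x y
  simp only [← Algebra.smul_def] at h
  have e3 : (2 : R) * (x * y) = x * y + x * y := two_mul _
  rw [e3] at h
  have h2 := congrArg (Algebra.trace ℤ R) h
  rw [trace_int hrk] at h2
  simp only [map_sub, map_add, map_smul, smul_eq_mul] at h2
  rw [Bf]
  linarith [h2]

lemma norm_int (c : ℤ) : Algebra.norm ℤ (algebraMap ℤ R c) = c ^ 2 := by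
  classical
  let b : Basis (Fin 2) ℤ R := (Module.Free.chooseBasis ℤ R).reindex
    (Fintype.equivFinOfCardEq (by rw [← Module.finrank_eq_card_chooseBasisIndex, hrk]))
  rw [Algebra.norm_algebraMap_of_basis b, Fintype.card_fin]

lemma norm_smul_int (c : ℤ) (t : R) :
    Algebra.norm ℤ (algebraMap ℤ R c * t) = c ^ 2 * Algebra.norm ℤ t := by
  rw [map_mul, norm_int hrk]

lemma Bf_smul_right (c : ℤ) (x t : R) : Bf x (algebraMap ℤ R c * t) = c * Bf x t := by
  simp only [Bf, ← Algebra.smul_def, map_smul, mul_smul_comm, smul_eq_mul]; ring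

lemma norm_shift (c : ℤ) (x t : R) :
    Algebra.norm ℤ (x + algebraMap ℤ R c * t)
      = Algebra.norm ℤ x + c * Bf x t + c ^ 2 * Algebra.norm ℤ t := by
  rw [norm_add' hrk, norm_smul_int hrk, Bf_smul_right hrk]; ring

end

section
variable {R : Type*} [CommRing R] [IsDomain R] [CharZero R]
    [Module.Free ℤ R] [Module.Finite ℤ R] [IsDedekindDomain R]
    (hrk : Module.finrank ℤ R = 2) (ℓ : ℕ) (hℓ : ℓ.Prime)

lemma cast_pow' (n : ℕ) : algebraMap ℤ R ((ℓ:ℤ)^n) = ((ℓ:R))^n := by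
  simp

lemma exists_shift' {c x y : R}
    (h : Ideal.Quotient.mk (Ideal.span {c}) x = Ideal.Quotient.mk _ y) :
    ∃ t, y = x + c * t := by
  have h2 := Ideal.Quotient.eq.mp h
  rw [Ideal.mem_span_singleton] at h2
  obtain ⟨t, ht⟩ := h2
  exact ⟨-t, by linear_combination -ht⟩

include hrk in
lemma norm_congr_zmod {n : ℕ} {x y : R}
    (h : Ideal.Quotient.mk (Ideal.span {(ℓ:R)^n}) x = Ideal.Quotient.mk _ y) :
    ((Algebra.norm ℤ x : ZMod (ℓ^n)) = (Algebra.norm ℤ y : ZMod (ℓ^n))) := by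
  obtain ⟨t, rfl⟩ := exists_shift' h
  rw [show ((ℓ:R))^n * t = algebraMap ℤ R ((ℓ:ℤ)^n) * t by rw [cast_pow']]
  rw [norm_shift hrk]
  have hz : ((ℓ : ZMod (ℓ^n)))^n = 0 := by
    rw [← Nat.cast_pow, ZMod.natCast_self]
  push_cast
  rw [hz]
  ring

lemma isUnit_lift {n : ℕ} {x : R}
    (hx : IsUnit (Ideal.Quotient.mk (Ideal.span {(ℓ:R)}) x)) :
    IsUnit (Ideal.Quotient.mk (Ideal.span {(ℓ:R)^n}) x) := by
  obtain ⟨v, hv⟩ := isUnit_iff_exists_inv.mp hx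
  obtain ⟨b,

 rfl⟩ := Ideal.Quotient.mk_surjective v
  rw [← map_mul] at hv
  have h1 : x * b - 1 ∈ Ideal.span {(ℓ:R)} := by
    rw [← Ideal.Quotient.eq_zero_iff_mem, map_sub, hv, map_one, sub_self]
  rw [Ideal.mem_span_singleton] at h1
  obtain ⟨r, hr⟩ := h1
  apply isUnit_of_mul_isUnit_left (y := Ideal.Quotient.mk (Ideal.span {(ℓ:R)^n}) b)
  rw [← map_mul]
  have hxb : x * b = 1 + (ℓ:R) * r := by linear_combination hr
  rw [hxb, map_add, map_one]
  refine IsNilpotent.isUnit_one_add ⟨n, ?_⟩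
  rw [← map_pow, Ideal.Quotient.eq_zero_iff_mem, Ideal.mem_span_singleton, mul_pow]
  exact Dvd.intro _ rfl

include hℓ in
lemma finiteQuot (n : ℕ) : Finite (R ⧸ Ideal.span {(ℓ:R)^n}) := by
  have hne : ((ℓ:R))^n ≠ 0 := pow_ne_zero _ (by exact_mod_cast hℓ.ne_zero)
  exact id (Ideal.finiteQuotientOfFreeOfNeBot _
    (by simpa [Ideal.span_singleton_eq_bot] using hne))

include hrk in
lemma card_quot1 : Nat.card (R ⧸ Ideal.span {(ℓ:R)}) = ℓ ^ 2 := by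
  have h1 : Ideal.absNorm (Ideal.span {(ℓ:R)}) = ℓ^2 := by
    rw [Ideal.absNorm_span_singleton,
      show ((ℓ:R)) = algebraMap ℤ R (ℓ:ℤ) by simp, norm_int hrk]
    simp [Int.natAbs_pow]
  rw [Ideal.absNorm_apply, Submodule.cardQuot_apply] at h1
  exact h1

/-- The additive character `t ↦ Tr(z t) mod ℓ` descended to `R ⧸ (ℓ)`. -/
noncomputable def nuBar (z : R) : (R ⧸ Ideal.span {(ℓ:R)}) →+ ZMod ℓ where
  toFun q := Quotient.liftOn' q (fun t => ((Algebra.trace ℤ R (z * t) : ℤ) : ZMod ℓ))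
    (by
      intro s t hst
      have h : s - t ∈ Ideal.span {(ℓ:R)} := by
        rwa [Submodule.quotientRel_def] at hst
      rw [Ideal.mem_span_singleton] at h
      obtain ⟨r, hr⟩ := h
      have : z * s = z * t + (ℓ:R) * (z * r) := by linear_combination z * hr
      simp only [this, map_add]
      rw [show ((ℓ:R)) * (z * r) = algebraMap ℤ R (ℓ:ℤ) * (z * r) by simp,
        ← Algebra.smul_def, map_smul, smul_eq_mul]
      push_cast
      simp [ZMod.natCast_self])
  map_zero' := by
    have h0 : (0 : R ⧸ Ideal.span {(ℓ:R)}) = Quotient.mk'' 0 := rfl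
    rw [h0, Quotient.liftOn'_mk'']
    simp
  map_add' q q' := by
    refine Quotient.inductionOn₂' q q' (fun s t => ?_)
    rw [show (Quotient.mk'' s : R ⧸ Ideal.span {(ℓ:R)}) = Submodule.Quotient.mk s from rfl,
      show (Quotient.mk'' t : R ⧸ Ideal.span {(ℓ:R)}) = Submodule.Quotient.mk t from rfl,
      ← Submodule.Quotient.mk_add,
      show (Submodule.Quotient.mk (s + t) : R ⧸ Ideal.span {(ℓ:R)}) = Quotient.mk'' (s + t) from rfl,
      show (Submodule.Quotient.mk s : R ⧸ Ideal.span {(ℓ:R)}) = Quotient.mk'' s from rfl,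
      show (Submodule.Quotient.mk t : R ⧸ Ideal.span {(ℓ:R)}) = Quotient.mk'' t from rfl,
      Quotient.liftOn'_mk'', Quotient.liftOn'_mk'', Quotient.liftOn'_mk'']
    rw [mul_add, map_add]
    push_cast
    ring

lemma nuBar_mk (z t : R) :
    nuBar ℓ z (Ideal.Quotient.mk (Ideal.span {(ℓ:R)}) t)
      = ((Algebra.trace ℤ R (z * t) : ℤ) : ZMod ℓ) := rfl

include hrk hℓ in
lemma nuBar_surj (hodd : ℓ ≠ 2) (z : R)
    (hz : IsUnit (Ideal.Quotient.mk (Ideal.span {(ℓ:R)}) z)) :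
    Function.Surjective (nuBar ℓ z) := by
  obtain ⟨v, hv⟩ := isUnit_iff_exists_inv.mp hz
  obtain ⟨c, rfl⟩ := Ideal.Quotient.mk_surjective v
  rw [← map_mul] at hv
  have h1 : z * c - 1 ∈ Ideal.span {(ℓ:R)} := by
    rw [← Ideal.Quotient.eq_zero_iff_mem, map_sub, hv, map_one, sub_self]
  rw [Ideal.mem_span_singleton] at h1
  obtain ⟨r, hr⟩ := h1
  have hval : nuBar ℓ z (Ideal.Quotient.mk (Ideal.span {(ℓ:R)}) c) = ((2 : ℤ) : ZMod ℓ) := by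
    rw [nuBar_mk]
    have hzc : z * c = 1 + (ℓ:R) * r := by linear_combination hr
    rw [hzc, show (1 : R) + (ℓ:R) * r = algebraMap ℤ R 1 + algebraMap ℤ R (ℓ:ℤ) * r by simp,
      map_add, trace_int hrk, ← Algebra.smul_def, map_smul, smul_eq_mul]
    push_cast
    simp [ZMod.natCast_self]
  have h2 : ((2:ℤ) : ZMod ℓ) ≠ 0 := by
    rw [Ne, ZMod.intCast_zmod_eq_zero_iff_dvd]
    intro hdvd
    have : ℓ ∣ 2 := by exact_mod_cast hdvd
    exact hodd ((Nat.prime_dvd_prime_iff_eq hℓ Nat.prime_two).mp this)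
  intro t
  haveI : NeZero ℓ := ⟨hℓ.ne_zero⟩
  refine ⟨(t * ((2:ℤ) : ZMod ℓ)⁻¹).val • Ideal.Quotient.mk (Ideal.span {(ℓ:R)}) c, ?_⟩
  haveI : Fact ℓ.Prime := ⟨hℓ⟩
  rw [map_nsmul, hval, nsmul_eq_mul, ZMod.natCast_val, ZMod.cast_id', id_eq,
    mul_assoc, inv_mul_cancel₀ h2, mul_one]

include hrk hℓ in
lemma nuBar_fiber_card (hodd : ℓ ≠ 2) (z : R)
    (hz : IsUnit (Ideal.Quotient.mk (Ideal.span {(ℓ:R)}) z)) (c : ZMod ℓ) :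
    Nat.card {q : R ⧸ Ideal.span {(ℓ:R)} // nuBar ℓ z q = c} = ℓ := by
  have hfin : Finite (R ⧸ Ideal.span {(ℓ:R)^1}) := finiteQuot ℓ hℓ 1
  rw [pow_one] at hfin
  have hm := card_fiber_mul (nuBar ℓ z) (nuBar_surj hrk ℓ hℓ hodd z hz) c
  rw [card_quot1 hrk ℓ, Nat.card_zmod] at hm
  exact Nat.eq_of_mul_eq_mul_right hℓ.pos (by rw [hm, sq])

end


section main
variable {R : Type*} [CommRing R] [IsDomain R] [CharZero R]
    [Module.Free ℤ R] [Module.Finite ℤ R] [IsDedekindDomain R]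
    (hrk : Module.finrank ℤ R = 2) (ℓ : ℕ) (hℓ : ℓ.Prime)
    (k : ℤ) (g : (R ⧸ Ideal.span {(ℓ:R)})ˣ)

/-- the counting condition -/
def Scond (n : ℕ) (hn : Ideal.span {(ℓ:R)^n} ≤ Ideal.span {(ℓ:R)})
    (g' : (R ⧸ Ideal.span {(ℓ:R)^n})ˣ) : Prop :=
  Units.map (Ideal.Quotient.factor (S := Ideal.span {(ℓ:R)^n}) (T := Ideal.span {(ℓ:R)}) hn).toMonoidHom g' = g ∧
  ∀ x : R, Ideal.Quotient.mk (Ideal.span {(ℓ:R)^n}) x = (g' : _) →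
    ((Algebra.norm ℤ x : ZMod (ℓ^n)) = (k : ZMod (ℓ^n)))

include hrk hℓ in
lemma step_lemma (hodd : ℓ ≠ 2) (hk : IsCoprime k (ℓ:ℤ)) (a : ℕ) (ha : 1 ≤ a)
    (h1 : Ideal.span {(ℓ:R)^a} ≤ Ideal.span {(ℓ:R)})
    (h2 : Ideal.span {(ℓ:R)^(a+1)} ≤ Ideal.span {(ℓ:R)}) :
    Nat.card {g'' : (R ⧸ Ideal.span {(ℓ:R)^(a+1)})ˣ // Scond ℓ k g (a+1) h2 g''}
      = ℓ * Nat.card {g' : (R ⧸ Ideal.span {(ℓ:R)^a})ˣ // Scond ℓ k g a h1 g'} := by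
  classical
  obtain ⟨a', rfl⟩ : ∃ a', a = a' + 1 := ⟨a - 1, (Nat.succ_pred_eq_of_pos ha).symm⟩
  haveI fin1 : Finite (R ⧸ Ideal.span {(ℓ:R)^(a'+1+1)}) := finiteQuot ℓ hℓ _
  haveI fin2 : Finite (R ⧸ Ideal.span {(ℓ:R)^(a'+1)}) := finiteQuot ℓ hℓ _
  have hℓR : ((ℓ:R)) ≠ 0 := by exact_mod_cast hℓ.ne_zero
  set fac : (R ⧸ Ideal.span {(ℓ:R)^((a'+1)+1)}) →+* (R ⧸ Ideal.span {(ℓ:R)^(a'+1)}) :=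
    Ideal.Quotient.factor
      (Ideal.span_singleton_le_span_singleton.mpr (pow_dvd_pow _ (Nat.le_succ _))) with hfac
  have hcomp : ∀ q, Ideal.Quotient.factor h1 (fac q) = Ideal.Quotient.factor h2 q := by
    intro q
    obtain ⟨x, rfl⟩ := Ideal.Quotient.mk_surjective q
    simp only [hfac, Ideal.Quotient.factor_mk]
  have condmap : ∀ w : (R ⧸ Ideal.span {(ℓ:R)^((a'+1)+1)})ˣ, Scond ℓ k g ((a'+1)+1) h2 w →
      Scond ℓ k g (a'+1) h1 (Units.map fac.toMonoidHom w) := by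
    intro w hw
    obtain ⟨x'', hx''⟩ := Ideal.Quotient.mk_surjective (w : R ⧸ Ideal.span {(ℓ:R)^((a'+1)+1)})
    constructor
    · apply Units.ext
      rw [Units.coe_map, Units.coe_map]
      have hv := congrArg Units.val hw.1
      rw [Units.coe_map] at hv
      have hgoal : Ideal.Quotient.factor h1 (fac ((w : R ⧸ Ideal.span {(ℓ:R)^((a'+1)+1)})))
          = (g : R ⧸ Ideal.span {(ℓ:R)}) := by rw [hcomp]; exact hv
      exact hgoal
    · intro x hx
      have hfw : fac ((w : R ⧸ Ideal.span {(ℓ:R)^((a'+1)+1)}))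
          = Ideal.Quotient.mk (Ideal.span {(ℓ:R)^(a'+1)}) x'' := by
        rw [← hx'', hfac, Ideal.Quotient.factor_mk]
      have hxx : Ideal.Quotient.mk (Ideal.span {(ℓ:R)^(a'+1)}) x = Ideal.Quotient.mk _ x'' := by
        rw [hx, Units.coe_map]
        exact hfw
      rw [norm_congr_zmod hrk ℓ hxx]
      exact zmod_down (pow_dvd_pow ℓ (Nat.le_succ (a'+1))) (hw.2 x'' hx'')
  set Φ : {g'' : (R ⧸ Ideal.span {(ℓ:R)^((a'+1)+1)})ˣ // Scond ℓ k g ((a'+1)+1) h2 g''} →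
      {g' : (R ⧸ Ideal.span {(ℓ:R)^(a'+1)})ˣ // Scond ℓ k g (a'+1) h1 g'} :=
    fun w => ⟨Units.map fac.toMonoidHom w.1, condmap w.1 w.2⟩ with hΦ
  haveI : NeZero ℓ := ⟨hℓ.ne_zero⟩
  have fibcard : ∀ s, Nat.card {w // Φ w = s} = ℓ := by
    intro s
    obtain ⟨g', hs⟩ := s
    set x₀ := Function.surjInv Ideal.Quotient.mk_surjective
      ((g' : R ⧸ Ideal.span {(ℓ:R)^(a'+1)})) with hx₀def
    have hx₀ : Ideal.Quotient.mk (Ideal.span {(ℓ:R)^(a'+1)}) x₀ = (g' : _) :=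
      Function.surjInv_eq _ _
    have hN₀ := hs.2 x₀ hx₀
    have hdvd : ((ℓ:ℤ)^(a'+1)) ∣ (k - Algebra.norm ℤ x₀) := by
      rw [← sub_eq_zero, ← Int.cast_sub, ZMod.intCast_zmod_eq_zero_iff_dvd] at hN₀
      have h4 : ((ℓ:ℤ))^(a'+1) ∣ (Algebra.norm ℤ x₀ - k) := by exact_mod_cast hN₀
      obtain ⟨c, hc⟩ := h4
      exact ⟨-c, by linear_combination -hc⟩
    obtain ⟨m, hm⟩ := hdvd
    set z := algebraMap ℤ R (Algebra.trace ℤ R x₀) - x₀ with hzdef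
    have hzx : x₀ * z = algebraMap ℤ R (Algebra.norm ℤ x₀) := by
      have hq := quad_id hrk x₀
      rw [hzdef]
      linear_combination -hq
    have hgx₀ : Ideal.Quotient.mk (Ideal.span {(ℓ:R)}) x₀ = (g : _) := by
      have hv := congrArg Units.val hs.1
      rw [Units.coe_map] at hv
      have h5 : Ideal.Quotient.factor h1 (Ideal.Quotient.mk _ x₀) = (g : _) := by
        rw [hx₀]; exact hv
      rwa [Ideal.Quotient.factor_mk] at h5
    have hux₀ : IsUnit (Ideal.Quotient.mk (Ideal.span {(ℓ:R)}) x₀) := by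
      rw [hgx₀]; exact Units.isUnit g
    have hkunit : IsUnit (Ideal.Quotient.mk (Ideal.span {(ℓ:R)})
        (algebraMap ℤ R (Algebra.norm ℤ x₀))) := by
      obtain ⟨u, v, huv⟩ := hk
      have key : Algebra.norm ℤ x₀ * u = 1 + (ℓ:ℤ) * (-(u * (ℓ:ℤ)^a' * m) - v) := by
        linear_combination (-u) * hm + huv
      apply IsUnit.of_mul_eq_one (Ideal.Quotient.mk _ (algebraMap ℤ R u))
      have key' : algebraMap ℤ R (Algebra.norm ℤ x₀) * algebraMap ℤ R u
          = 1 + (ℓ:R) * algebraMap ℤ R (-(u * (ℓ:ℤ)^a' * m) - v) := by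
        rw [← map_mul, key]
        push_cast
        ring
      rw [← map_mul, key', map_add, map_one]
      have h0 : Ideal.Quotient.mk (Ideal.span {(ℓ:R)})
          ((ℓ:R) * algebraMap ℤ R (-(u * (ℓ:ℤ)^a' * m) - v)) = 0 := by
        rw [Ideal.Quotient.eq_zero_iff_mem, Ideal.mem_span_singleton]
        exact dvd_mul_right _ _
      rw [h0, add_zero]
    have hzu : IsUnit (Ideal.Quotient.mk (Ideal.span {(ℓ:R)}) z) := by
      have hmul : IsUnit (Ideal.Quotient.mk (Ideal.span {(ℓ:R)}) x₀ *
          Ideal.Quotient.mk (Ideal.span {(ℓ:R)}) z) := by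
        rw [← map_mul, hzx]; exact hkunit
      exact isUnit_of_mul_isUnit_right hmul
    set rep : (R ⧸ Ideal.span {(ℓ:R)}) → R :=
      Function.surjInv Ideal.Quotient.mk_surjective with hrepdef
    have hrep : ∀ q, Ideal.Quotient.mk (Ideal.span {(ℓ:R)}) (rep q) = q :=
      fun q => Function.surjInv_eq _ q
    have hred : ∀ t : R, Ideal.Quotient.mk (Ideal.span {(ℓ:R)}) (x₀ + (ℓ:R)^(a'+1) * t)
        = Ideal.Quotient.mk _ x₀ := by
      intro t
      rw [Ideal.Quotient.eq, Ideal.mem_span_singleton]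
      have h6 : x₀ + (ℓ:R)^(a'+1) * t - x₀ = (ℓ:R)^(a'+1) * t := by ring
      rw [h6]
      exact (dvd_pow_self (ℓ:R) (by omega : (a'+1) ≠ 0)).mul_right t
    have humk : ∀ t : R, IsUnit (Ideal.Quotient.mk (Ideal.span {(ℓ:R)^((a'+1)+1)})
        (x₀ + (ℓ:R)^(a'+1) * t)) := by
      intro t
      apply isUnit_lift
      rw [hred t]
      exact hux₀
    have hns : ∀ t : R, Algebra.norm ℤ (x₀ + (ℓ:R)^(a'+1) * t)
        = Algebra.norm ℤ x₀ + (ℓ:ℤ)^(a'+1) * Bf x₀ t + ((ℓ:ℤ)^(a'+1))^2 * Algebra.norm ℤ t := by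
      intro t
      rw [show ((ℓ:R))^(a'+1) * t = algebraMap ℤ R ((ℓ:ℤ)^(a'+1)) * t by rw [cast_pow']]
      rw [norm_shift hrk]
    have hnu : ∀ t : R, nuBar ℓ z (Ideal.Quotient.mk (Ideal.span {(ℓ:R)}) t)
        = ((Bf x₀ t : ℤ) : ZMod ℓ) := by
      intro t
      rw [nuBar_mk, Bf_eq, ← hzdef]
    have hFcond : ∀ q : R ⧸ Ideal.span {(ℓ:R)}, nuBar ℓ z q = ((m : ℤ) : ZMod ℓ) →
        Scond ℓ k g ((a'+1)+1) h2 (humk (rep q)).unit := by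
      intro q hq
      constructor
      · apply Units.ext
        rw [Units.coe_map]
        have h7 : Ideal.Quotient.factor h2
            (Ideal.Quotient.mk (Ideal.span {(ℓ:R)^((a'+1)+1)}) (x₀ + (ℓ:R)^(a'+1) * rep q))
            = (g : R ⧸ Ideal.span {(ℓ:R)}) := by
          rw [Ideal.Quotient.factor_mk, hred (rep q), hgx₀]
        have h8 : ((humk (rep q)).unit : R ⧸ Ideal.span {(ℓ:R)^((a'+1)+1)})
            = Ideal.Quotient.mk _ (x₀ + (ℓ:R)^(a'+1) * rep q) := IsUnit.unit_spec _
        rw [show ((Ideal.Quotient.factor h2).toMonoidHom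
            ((humk (rep q)).unit : R ⧸ Ideal.span {(ℓ:R)^((a'+1)+1)}))
            = (Ideal.Quotient.factor h2)
              ((humk (rep q)).unit : R ⧸ Ideal.span {(ℓ:R)^((a'+1)+1)}) from rfl]
        rw [h8, h7]
      · intro x hx
        have h8 : ((humk (rep q)).unit : R ⧸ Ideal.span {(ℓ:R)^((a'+1)+1)})
            = Ideal.Quotient.mk _ (x₀ + (ℓ:R)^(a'+1) * rep q) := IsUnit.unit_spec _
        have hx2 : Ideal.Quotient.mk (Ideal.span {(ℓ:R)^((a'+1)+1)}) x
            = Ideal.Quotient.mk _ (x₀ + (ℓ:R)^(a'+1) * rep q) := by rw [hx, h8]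
        rw [norm_congr_zmod hrk ℓ hx2]
        have hqB : ((Bf x₀ (rep q) : ℤ) : ZMod ℓ) = ((m:ℤ) : ZMod ℓ) := by
          rw [← hnu (rep q), hrep q]; exact hq
        have hdvdB : (ℓ:ℤ) ∣ (Bf x₀ (rep q) - m) := by
          rw [← sub_eq_zero, ← Int.cast_sub, ZMod.intCast_zmod_eq_zero_iff_dvd] at hqB
          exact_mod_cast hqB
        obtain ⟨e, hee⟩ := hdvdB
        rw [← sub_eq_zero, ← Int.cast_sub, ZMod.intCast_zmod_eq_zero_iff_dvd]
        have h9 : ((ℓ:ℤ))^((a'+1)+1) ∣ (Algebra.norm ℤ (x₀ + (ℓ:R)^(a'+1) * rep q) - k) := by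
          refine ⟨e + (ℓ:ℤ)^a' * Algebra.norm ℤ (rep q), ?_⟩
          rw [hns]
          linear_combination ((ℓ:ℤ))^(a'+1) * hee - hm
        exact_mod_cast h9
    have hFfib : ∀ (q : R ⧸ Ideal.span {(ℓ:R)}) (hq : nuBar ℓ z q = ((m:ℤ) : ZMod ℓ)),
        Φ ⟨(humk (rep q)).unit, hFcond q hq⟩ = ⟨g', hs⟩ := by
      intro q hq
      apply Subtype.ext
      apply Units.ext
      show fac ((humk (rep q)).unit : R ⧸ Ideal.span {(ℓ:R)^(a'+1+1)}) = (g' : _)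
      rw [IsUnit.unit_spec, hfac, Ideal.Quotient.factor_mk, ← hx₀, Ideal.Quotient.eq,
        Ideal.mem_span_singleton]
      exact ⟨rep q, by ring⟩
    set Ψ : {q : R ⧸ Ideal.span {(ℓ:R)} // nuBar ℓ z q = ((m:ℤ) : ZMod ℓ)} →
        {w // Φ w = ⟨g', hs⟩} :=
      fun q => ⟨⟨(humk (rep q.1)).unit, hFcond q.1 q.2⟩, hFfib q.1 q.2⟩ with hΨ
    have hinj : Function.Injective Ψ := by
      intro q₁ q₂ hqq
      have hv : Ideal.Quotient.mk (Ideal.span {(ℓ:R)^(a'+1+1)}) (x₀ + (ℓ:R)^(a'+1) * rep q₁.1)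
          = Ideal.Quotient.mk _ (x₀ + (ℓ:R)^(a'+1) * rep q₂.1) := by
        have h10 := congrArg
          (fun w : {w // Φ w = ⟨g', hs⟩} =>
            ((w.1.1 : (R ⧸ Ideal.span {(ℓ:R)^(a'+1+1)})ˣ) : R ⧸ Ideal.span {(ℓ:R)^(a'+1+1)})) hqq
        simpa only [hΨ, IsUnit.unit_spec] using h10
      rw [Ideal.Quotient.eq, Ideal.mem_span_singleton] at hv
      obtain ⟨u, hu⟩ := hv
      have hcancel : rep q₁.1 - rep q₂.1 = (ℓ:R) * u := by
        have hpow : ((ℓ:R))^(a'+1) ≠ 0 := pow_ne_zero _ hℓR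
        apply mul_left_cancel₀ hpow
        linear_combination hu
      have h11 : q₁.1 = q₂.1 := by
        rw [← hrep q₁.1, ← hrep q₂.1, Ideal.Quotient.eq, Ideal.mem_span_singleton]
        exact ⟨u, hcancel⟩
      exact Subtype.ext h11
    have hsurj : Function.Surjective Ψ := by
      rintro ⟨⟨g'', hg''⟩, hfib⟩
      have hfacval : fac ((g'' : R ⧸ Ideal.span {(ℓ:R)^(a'+1+1)}))
          = (g' : R ⧸ Ideal.span {(ℓ:R)^(a'+1)}) := by
        have h12 := congrArg
          (fun w : {g' // Scond ℓ k g (a'+1) h1 g'} =>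
            ((w.1 : (R ⧸ Ideal.span {(ℓ:R)^(a'+1)})ˣ) : R ⧸ Ideal.span {(ℓ:R)^(a'+1)})) hfib
        simp only [hΦ, Units.coe_map] at h12
        exact h12
      set x'' := Function.surjInv Ideal.Quotient.mk_surjective
        ((g'' : R ⧸ Ideal.span {(ℓ:R)^(a'+1+1)})) with hx''def
      have hx'' : Ideal.Quotient.mk (Ideal.span {(ℓ:R)^(a'+1+1)}) x'' = (g'' : _) :=
        Function.surjInv_eq _ _
      have hmk : Ideal.Quotient.mk (Ideal.span {(ℓ:R)^(a'+1)}) x₀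
          = Ideal.Quotient.mk _ x'' := by
        rw [hx₀, ← hfacval, ← hx'', hfac, Ideal.Quotient.factor_mk]
      obtain ⟨t, ht⟩ := exists_shift' hmk
      have hnx'' := hg''.2 x'' hx''
      have hdvd2 : ((ℓ:ℤ)) ∣ (Bf x₀ t - m) := by
        rw [← sub_eq_zero, ← Int.cast_sub, ZMod.intCast_zmod_eq_zero_iff_dvd] at hnx''
        have h3 : ((ℓ:ℤ))^(a'+1+1) ∣ (Algebra.norm ℤ x'' - k) := by exact_mod_cast hnx''
        rw [ht, hns] at h3
        obtain ⟨d, hd⟩ := h3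
        refine ⟨d - (ℓ:ℤ)^a' * Algebra.norm ℤ t, ?_⟩
        have hpow : ((ℓ:ℤ))^(a'+1) ≠ 0 := pow_ne_zero _ (by exact_mod_cast hℓ.ne_zero)
        apply mul_left_cancel₀ hpow
        linear_combination hd + hm
      have hq : nuBar ℓ z (Ideal.Quotient.mk (Ideal.span {(ℓ:R)}) t) = ((m:ℤ) : ZMod ℓ) := by
        rw [hnu t, ← sub_eq_zero, ← Int.cast_sub, ZMod.intCast_zmod_eq_zero_iff_dvd]
        exact_mod_cast hdvd2
      refine ⟨⟨Ideal.Quotient.mk _ t, hq⟩, ?_⟩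
      apply Subtype.ext
      apply Subtype.ext
      apply Units.ext
      show Ideal.Quotient.mk (Ideal.span {(ℓ:R)^(a'+1+1)})
          (x₀ + (ℓ:R)^(a'+1) * rep (Ideal.Quotient.mk (Ideal.span {(ℓ:R)}) t)) = (g'' : _)
      rw [← hx'', ht, Ideal.Quotient.eq, Ideal.mem_span_singleton]
      have h13 := hrep (Ideal.Quotient.mk (Ideal.span {(ℓ:R)}) t)
      rw [Ideal.Quotient.eq, Ideal.mem_span_singleton] at h13
      obtain ⟨u, hu⟩ := h13
      exact ⟨u, by linear_combination (ℓ:R)^(a'+1) * hu⟩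
    rw [← Nat.card_congr (Equiv.ofBijective Ψ ⟨hinj, hsurj⟩)]
    exact nuBar_fiber_card hrk ℓ hℓ hodd z hzu _
  calc Nat.card {g'' : (R ⧸ Ideal.span {(ℓ:R)^((a'+1)+1)})ˣ // Scond ℓ k g ((a'+1)+1) h2 g''}
      = Nat.card ((s : {g' : (R ⧸ Ideal.span {(ℓ:R)^(a'+1)})ˣ // Scond ℓ k g (a'+1) h1 g'}) × {w // Φ w = s}) :=
        Nat.card_congr (Equiv.sigmaFiberEquiv Φ).symm
    _ = Nat.card ({g' : (R ⧸ Ideal.span {(ℓ:R)^(a'+1)})ˣ // Scond ℓ k g (a'+1) h1 g'} × ZMod ℓ) := by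
        refine Nat.card_congr ((Equiv.sigmaCongrRight (fun s => ?_)).trans (Equiv.sigmaEquivProd _ _))
        exact (Finite.card_eq.mp (by rw [fibcard s, Nat.card_zmod])).some
    _ = ℓ * Nat.card {g' : (R ⧸ Ideal.span {(ℓ:R)^(a'+1)})ˣ // Scond ℓ k g (a'+1) h1 g'} := by
        rw [Nat.card_prod, Nat.card_zmod, mul_comm]

include hrk in
lemma base_lemma
    (hg : ∀ x : R, Ideal.Quotient.mk (Ideal.span {(ℓ:R)}) x = (g : _) →
      ((Algebra.norm ℤ x : ZMod ℓ) = (k : ZMod ℓ)))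
    (h1 : Ideal.span {(ℓ:R)^1} ≤ Ideal.span {(ℓ:R)}) :
    Nat.card {g' : (R ⧸ Ideal.span {(ℓ:R)^1})ˣ // Scond ℓ k g 1 h1 g'} = 1 := by
  have hIeq : Ideal.span {(ℓ:R)^1} = Ideal.span {(ℓ:R)} := by rw [pow_one]
  set e := Ideal.quotEquivOfEq hIeq with he
  obtain ⟨x, hx⟩ := Ideal.Quotient.mk_surjective (g : R ⧸ Ideal.span {(ℓ:R)})
  have hsymm : e.symm (g : R ⧸ Ideal.span {(ℓ:R)}) = Ideal.Quotient.mk _ x := by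
    rw [← hx, ← Ideal.quotEquivOfEq_mk hIeq x, ← he, RingEquiv.symm_apply_apply]
  set g₀ : (R ⧸ Ideal.span {(ℓ:R)^1})ˣ := Units.map e.symm.toRingHom.toMonoidHom g with hg₀
  have hg₀val : (g₀ : R ⧸ Ideal.span {(ℓ:R)^1}) = Ideal.Quotient.mk _ x := by
    rw [hg₀, Units.coe_map]
    exact hsymm
  have hfactinj : Function.Injective (Ideal.Quotient.factor h1) := by
    intro p q hpq
    obtain ⟨xp, rfl⟩ := Ideal.Quotient.mk_surjective p
    obtain ⟨xq, rfl⟩ := Ideal.Quotient.mk_surjective q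
    rw [Ideal.Quotient.factor_mk, Ideal.Quotient.factor_mk] at hpq
    rw [Ideal.Quotient.eq] at hpq ⊢
    rw [hIeq]
    exact hpq
  have hcond : Scond ℓ k g 1 h1 g₀ := by
    constructor
    · apply Units.ext
      rw [Units.coe_map]
      show Ideal.Quotient.factor h1 ((g₀ : R ⧸ Ideal.span {(ℓ:R)^1})) = _
      rw [hg₀val, Ideal.Quotient.factor_mk, hx]
    · intro y hy
      rw [hg₀val] at hy
      have h15 : Ideal.Quotient.mk (Ideal.span {(ℓ:R)}) y
          = (g : R ⧸ Ideal.span {(ℓ:R)}) := by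
        rw [← hx]
        rw [Ideal.Quotient.eq] at hy ⊢
        rw [← hIeq]
        exact hy
      exact zmod_down (by rw [pow_one]) (hg y h15)
  rw [Nat.card_eq_one_iff_exists]
  refine ⟨⟨g₀, hcond⟩, ?_⟩
  rintro ⟨w, hw⟩
  apply Subtype.ext
  apply Units.ext
  show (w : R ⧸ Ideal.span {(ℓ:R)^1}) = (g₀ : _)
  have hv1 := congrArg Units.val hw.1
  rw [Units.coe_map] at hv1
  have hv0 := congrArg Units.val hcond.1
  rw [Units.coe_map] at hv0
  exact hfactinj (hv1.trans hv0.symm)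

include hrk hℓ in
lemma main_count (hodd : ℓ ≠ 2) (hk : IsCoprime k (ℓ:ℤ))
    (hg : ∀ x : R, Ideal.Quotient.mk (Ideal.span {(ℓ:R)}) x = (g : _) →
      ((Algebra.norm ℤ x : ZMod ℓ) = (k : ZMod ℓ)))
    (a : ℕ) (ha : 1 ≤ a) (h1 : Ideal.span {(ℓ:R)^a} ≤ Ideal.span {(ℓ:R)}) :
    Nat.card {g' : (R ⧸ Ideal.span {(ℓ:R)^a})ˣ // Scond ℓ k g a h1 g'} = ℓ^(a-1) := by
  induction a, ha using Nat.le_induction with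
  | base => rw [base_lemma hrk ℓ k g hg h1]; norm_num
  | succ n hn IH =>
    have hprev : Ideal.span {(ℓ:R)^n} ≤ Ideal.span {(ℓ:R)} :=
      Ideal.span_singleton_le_span_singleton.mpr (dvd_pow_self _ (by omega))
    rw [step_lemma hrk ℓ hℓ k g hodd hk n hn hprev h1, IH hprev]
    obtain ⟨n', rfl⟩ : ∃ n', n = n'+1 := ⟨n-1, (Nat.succ_pred_eq_of_pos hn).symm⟩
    rw [Nat.add_sub_cancel, Nat.add_sub_cancel, pow_succ, mul_comm]

end main

end Stmt6Aux




open NumberField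

/-- Lifting units of `O_K/ℓO_K` to `O_K/ℓᵃO_K` with prescribed norm: for an
imaginary quadratic field `K` and an odd prime `ℓ` unramified in `K`
(equivalently, not dividing the discriminant), the number of units
`g̃ ∈ (O_K/ℓᵃO_K)ˣ` reducing to a fixed `g ∈ (O_K/ℓO_K)ˣ` of norm `k` and with
norm `≡ k (mod ℓᵃ)` is `ℓ^(a−1)`.  The norm of a residue class is expressed via
(any) lift `x ∈ O_K` and the absolute norm `Algebra.norm ℤ`. -/
theorem stmt6 (K : Type*) [Field K] [NumberField K]
    (hdeg : Module.finrank ℚ K = 2)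
    (himag : ∀ v : NumberField.InfinitePlace K, v.IsComplex)
    (ℓ : ℕ) (hℓ : ℓ.Prime) (hodd : ℓ ≠ 2)
    (hur : ¬ ((ℓ : ℤ) ∣ NumberField.discr K))
    (a : ℕ) (ha : 1 ≤ a) (k : ℤ) (hk : IsCoprime k (ℓ : ℤ))
    (g : ((𝓞 K) ⧸ (Ideal.span {(ℓ : 𝓞 K)}))ˣ)
    (hg : ∀ x : 𝓞 K, Ideal.Quotient.mk (Ideal.span {(ℓ : 𝓞 K)}) x = (g : _) →
      ((Algebra.norm ℤ x : ZMod ℓ) = (k : ZMod ℓ))) :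
    Nat.card {g' : ((𝓞 K) ⧸ (Ideal.span {(ℓ : 𝓞 K) ^ a}))ˣ //
      Units.map (Ideal.Quotient.factor (S := Ideal.span {(ℓ : 𝓞 K) ^ a})
          (T := Ideal.span {(ℓ : 𝓞 K)})
          (Ideal.span_singleton_le_span_singleton.mpr
            (dvd_pow_self _ (Nat.one_le_iff_ne_zero.mp ha)))).toMonoidHom g' = g ∧
      ∀ x : 𝓞 K, Ideal.Quotient.mk (Ideal.span {(ℓ : 𝓞 K) ^ a}) x = (g' : _) →
        ((Algebra.norm ℤ x : ZMod (ℓ ^ a)) = (k : ZMod (ℓ ^ a)))} =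
      ℓ ^ (a - 1) := by
  have hrk : Module.finrank ℤ (𝓞 K) = 2 := by
    rw [NumberField.RingOfIntegers.rank, hdeg]
  exact Stmt6Aux.main_count hrk ℓ hℓ k g hodd hk hg a ha _
end

section
/- Define f(ℓ) = 1 − φ(ℓ)/|GL₂(ℤ/ℓℤ)| for primes ℓ, and for a positive integer n define F(n) = (1/φ(n)) · Σ over k in (ℤ/nℤ)ˣ of ∏_{ℓ | n, k ≡ 1 mod ℓ} f(ℓ). Then F(n) = ∏_{ℓ | n} (1 − 1/|GL₂(ℤ/ℓℤ)|). -/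
open Finset

lemma totient_prod_primes {S : Finset ℕ} (hS : ∀ ℓ ∈ S, ℓ.Prime) :
    Nat.totient (∏ ℓ ∈ S, ℓ) = ∏ ℓ ∈ S, (ℓ - 1) := by
  induction S using Finset.cons_induction with
  | empty => simp
  | cons p S hp ih =>
    have hpp : p.Prime := hS p (Finset.mem_cons_self _ _)
    have hrest : ∀ ℓ ∈ S, ℓ.Prime := fun ℓ hl => hS ℓ (Finset.mem_cons_of_mem hl)
    have hcop : Nat.Coprime p (∏ ℓ ∈ S, ℓ) :=
      Nat.Coprime.prod_right fun q hq =>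
        (Nat.coprime_primes hpp (hrest q hq)).mpr (fun h => hp (h ▸ hq))
    rw [Finset.prod_cons, Finset.prod_cons, Nat.totient_mul hcop, ih hrest,
      Nat.totient_prime hpp]

lemma count_lemma (n : ℕ) (hn : 1 < n) (S : Finset ℕ) (hS : S ⊆ n.primeFactors) :
    (((Finset.Icc 1 n).filter (fun k => Nat.Coprime k n)).filter
        (fun k => ∀ ℓ ∈ S, ((k : ZMod ℓ) = 1))).card * ∏ ℓ ∈ S, (ℓ - 1) = n.totient := by
  haveI : NeZero n := ⟨by omega⟩
  haveI : Fact (1 < n) := ⟨hn⟩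
  have hprime : ∀ ℓ ∈ S, ℓ.Prime := fun ℓ h => Nat.prime_of_mem_primeFactors (hS h)
  set m := ∏ ℓ ∈ S, ℓ with hm_def
  have hm : m ∣ n := Finset.prod_primes_dvd n (fun p hp => (hprime p hp).prime)
    (fun p hp => Nat.dvd_of_mem_primeFactors (hS hp))
  haveI : NeZero m := ⟨fun h => by rw [h, zero_dvd_iff] at hm; omega⟩
  have cast_iff : ∀ (t k : ℕ), 1 ≤ k → (((k : ZMod t) = 1) ↔ t ∣ k - 1) := by
    intro t k hk
    rw [show (1 : ZMod t) = ((1 : ℕ) : ZMod t) by simp, ZMod.natCast_eq_natCast_iff]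
    exact ⟨fun h => (Nat.modEq_iff_dvd' hk).mp h.symm,
      fun h => ((Nat.modEq_iff_dvd' hk).mpr h).symm⟩
  have key : ∀ k : ℕ, 1 ≤ k → ((∀ ℓ ∈ S, (k : ZMod ℓ) = 1) ↔ (k : ZMod m) = 1) := by
    intro k hk
    rw [cast_iff m k hk]
    constructor
    · intro h
      exact Finset.prod_primes_dvd _ (fun p hp => (hprime p hp).prime)
        (fun p hp => (cast_iff p k hk).mp (h p hp))
    · intro h ℓ hℓ
      exact (cast_iff ℓ k hk).mpr ((Finset.dvd_prod_of_mem _ hℓ).trans h)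
  have hcard : (((Finset.Icc 1 n).filter (fun k => Nat.Coprime k n)).filter
        (fun k => ∀ ℓ ∈ S, ((k : ZMod ℓ) = 1))).card
      = (Finset.univ.filter (fun u : (ZMod n)ˣ => ZMod.unitsMap hm u = 1)).card := by
    apply Finset.card_bij
      (fun k hk => ZMod.unitOfCoprime k (Finset.mem_filter.mp (Finset.mem_filter.mp hk).1).2)
    · intro k hk
      have h1 := (Finset.mem_filter.mp hk).2
      have hk1 : 1 ≤ k := (Finset.mem_Icc.mp
        (Finset.mem_filter.mp (Finset.mem_filter.mp hk).1).1).1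
      simp only [Finset.mem_filter, Finset.mem_univ, true_and]
      ext
      simp only [ZMod.unitsMap, Units.coe_map, ZMod.coe_unitOfCoprime, MonoidHom.coe_coe,
        map_natCast, Units.val_one]
      exact (key k hk1).mp h1
    · intro k hk k' hk' h
      have h2 : (k : ZMod n) = (k' : ZMod n) := by
        have := congrArg (fun u : (ZMod n)ˣ => (u : ZMod n)) h
        simpa [ZMod.coe_unitOfCoprime] using this
      rw [ZMod.natCast_eq_natCast_iff] at h2
      have hklt : k < n := by
        have h3 := Finset.mem_filter.mp (Finset.mem_filter.mp hk).1
        have h4 := Finset.mem_Icc.mp h3.1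
        rcases lt_or_eq_of_le h4.2 with h | h
        · exact h
        · exfalso; have := h3.2; rw [h] at this
          rw [Nat.Coprime, Nat.gcd_self] at this; omega
      have hklt' : k' < n := by
        have h3 := Finset.mem_filter.mp (Finset.mem_filter.mp hk').1
        have h4 := Finset.mem_Icc.mp h3.1
        rcases lt_or_eq_of_le h4.2 with h | h
        · exact h
        · exfalso; have := h3.2; rw [h] at this
          rw [Nat.Coprime, Nat.gcd_self] at this; omega
      have := h2
      unfold Nat.ModEq at this
      rwa [Nat.mod_eq_of_lt hklt, Nat.mod_eq_of_lt hklt'] at this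
    · intro u hu
      have hu1 : ZMod.unitsMap hm u = 1 := (Finset.mem_filter.mp hu).2
      refine ⟨(u : ZMod n).val, ?_, ?_⟩
      · have hvpos : 0 < (u : ZMod n).val := by
          rcases Nat.eq_zero_or_pos (u : ZMod n).val with h | h
          · exfalso
            have : (u : ZMod n) = 0 := by
              rwa [ZMod.val_eq_zero] at h
            exact Units.ne_zero u this
          · exact h
        have hcast : (((u : ZMod n).val : ℕ) : ZMod m) = 1 := by
          rw [ZMod.natCast_val, ← ZMod.castHom_apply (h := hm)]
          have := congrArg (fun w : (ZMod m)ˣ => (w : ZMod m)) hu1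
          simpa [ZMod.unitsMap] using this
        refine Finset.mem_filter.mpr ⟨Finset.mem_filter.mpr ⟨?_, ?_⟩, ?_⟩
        · exact Finset.mem_Icc.mpr ⟨hvpos, ((u : ZMod n).val_lt).le⟩
        · exact ZMod.val_coe_unit_coprime u
        · exact (key _ hvpos).mpr hcast
      · ext
        simp [ZMod.natCast_val, ZMod.cast_id]
  rw [hcard]
  have hker : (Finset.univ.filter (fun u : (ZMod n)ˣ => ZMod.unitsMap hm u = 1)).card
      = Nat.card (ZMod.unitsMap hm).ker := by
    rw [Nat.card_eq_fintype_card, ← Fintype.card_subtype]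
    apply Fintype.card_congr
    exact Equiv.subtypeEquivRight (fun u => ((ZMod.unitsMap hm).mem_ker).symm)
  rw [hker]
  have hsur : Function.Surjective (ZMod.unitsMap hm) := ZMod.unitsMap_surjective hm
  have h1 : Nat.card (ZMod.unitsMap hm).ker * (ZMod.unitsMap hm).ker.index
      = Nat.card (ZMod n)ˣ := Subgroup.card_mul_index _
  have h2 : (ZMod.unitsMap hm).ker.index = Nat.card (ZMod m)ˣ := by
    rw [Subgroup.index_ker, MonoidHom.range_eq_top.mpr hsur]
    exact Nat.card_congr Subgroup.topEquiv.toEquiv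
  have h3 : Nat.card (ZMod m)ˣ = ∏ ℓ ∈ S, (ℓ - 1) := by
    rw [Nat.card_eq_fintype_card, ZMod.card_units_eq_totient, totient_prod_primes hprime]
  have h4 : Nat.card (ZMod n)ˣ = n.totient := by
    rw [Nat.card_eq_fintype_card, ZMod.card_units_eq_totient]
  rw [h2, h3, h4] at h1
  exact h1

/-- The average over `k ∈ (ℤ/nℤ)ˣ` of `∏_{ℓ ∣ n, k ≡ 1 (mod ℓ)} (1 − φ(ℓ)/|GL₂(ℤ/ℓℤ)|)`
equals `∏_{ℓ ∣ n} (1 − 1/|GL₂(ℤ/ℓℤ)|)`. -/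
theorem stmt9 (n : ℕ) (hn : 0 < n) :
    (1 / (Nat.totient n : ℚ)) *
      ∑ k ∈ (Finset.Icc 1 n).filter (fun k => Nat.Coprime k n),
        ∏ ℓ ∈ n.primeFactors.filter (fun ℓ => (k : ZMod ℓ) = 1),
          (1 - (Nat.totient ℓ : ℚ) / (Nat.card (GL (Fin 2) (ZMod ℓ)) : ℚ)) =
      ∏ ℓ ∈ n.primeFactors,
        (1 - 1 / (Nat.card (GL (Fin 2) (ZMod ℓ)) : ℚ)) := by
  rcases eq_or_lt_of_le (show 1 ≤ n from hn) with h1 | h1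
  · -- n = 1
    rw [← h1]
    norm_num
  -- now 1 < n
  have hprime : ∀ ℓ ∈ n.primeFactors, ℓ.Prime := fun ℓ h => Nat.prime_of_mem_primeFactors h
  have htot : (0:ℚ) < (n.totient : ℚ) := by exact_mod_cast Nat.totient_pos.mpr hn
  have step1 : ∀ k ∈ (Finset.Icc 1 n).filter (fun k => Nat.Coprime k n),
      (∏ ℓ ∈ n.primeFactors.filter (fun ℓ => (k : ZMod ℓ) = 1),
        (1 - (Nat.totient ℓ : ℚ) / (Nat.card (GL (Fin 2) (ZMod ℓ)) : ℚ)))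
      = ∑ t ∈ n.primeFactors.powerset, ∏ ℓ ∈ t,
          (if (k : ZMod ℓ) = 1 then
            -(Nat.totient ℓ : ℚ) / (Nat.card (GL (Fin 2) (ZMod ℓ)) : ℚ) else 0) := by
    intro k _
    rw [Finset.prod_filter]
    have hsplit : ∀ ℓ ∈ n.primeFactors,
        (if (k : ZMod ℓ) = 1 then
          (1 - (Nat.totient ℓ : ℚ) / (Nat.card (GL (Fin 2) (ZMod ℓ)) : ℚ)) else 1)
        = (if (k : ZMod ℓ) = 1 then
            -(Nat.totient ℓ : ℚ) / (Nat.card (GL (Fin 2) (ZMod ℓ)) : ℚ) else 0) + 1 := by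
      intro ℓ _; split_ifs <;> ring
    rw [Finset.prod_congr rfl hsplit, Finset.prod_add]
    exact Finset.sum_congr rfl (fun t _ => by rw [Finset.prod_const_one, mul_one])
  rw [Finset.sum_congr rfl step1, Finset.sum_comm]
  have step2 : ∀ t ∈ n.primeFactors.powerset,
      (∑ k ∈ (Finset.Icc 1 n).filter (fun k => Nat.Coprime k n), ∏ ℓ ∈ t,
          (if (k : ZMod ℓ) = 1 then
            -(Nat.totient ℓ : ℚ) / (Nat.card (GL (Fin 2) (ZMod ℓ)) : ℚ) else 0))
      = (n.totient : ℚ) * ∏ ℓ ∈ t, (-1 / (Nat.card (GL (Fin 2) (ZMod ℓ)) : ℚ)) := by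
    intro t ht
    have htsub := Finset.mem_powerset.mp ht
    have htp : ∀ ℓ ∈ t, ℓ.Prime := fun ℓ h => hprime ℓ (htsub h)
    have e1 : ∀ k ∈ (Finset.Icc 1 n).filter (fun k => Nat.Coprime k n),
        (∏ ℓ ∈ t, (if (k : ZMod ℓ) = 1 then
            -(Nat.totient ℓ : ℚ) / (Nat.card (GL (Fin 2) (ZMod ℓ)) : ℚ) else 0))
        = (if (∀ ℓ ∈ t, (k : ZMod ℓ) = 1) then
            ∏ ℓ ∈ t, -(Nat.totient ℓ : ℚ) / (Nat.card (GL (Fin 2) (ZMod ℓ)) : ℚ) else 0) :=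
      fun k _ => Finset.prod_ite_zero
    rw [Finset.sum_congr rfl e1, ← Finset.sum_filter, Finset.sum_const, nsmul_eq_mul]
    have hφ : (∏ ℓ ∈ t, -(Nat.totient ℓ : ℚ) / (Nat.card (GL (Fin 2) (ZMod ℓ)) : ℚ))
        = (∏ ℓ ∈ t, ((ℓ : ℚ) - 1)) * ∏ ℓ ∈ t, (-1 / (Nat.card (GL (Fin 2) (ZMod ℓ)) : ℚ)) := by
      rw [← Finset.prod_mul_distrib]
      refine Finset.prod_congr rfl fun ℓ h => ?_
      rw [Nat.totient_prime (htp ℓ h)]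
      rw [Nat.cast_sub (htp ℓ h).one_le, Nat.cast_one]
      ring
    rw [hφ, ← mul_assoc]
    have hc := count_lemma n h1 t htsub
    have hcQ : (((((Finset.Icc 1 n).filter (fun k => Nat.Coprime k n)).filter
          (fun k => ∀ ℓ ∈ t, ((k : ZMod ℓ) = 1))).card : ℚ))
          * ∏ ℓ ∈ t, ((ℓ : ℚ) - 1) = (n.totient : ℚ) := by
      have := congrArg (Nat.cast : ℕ → ℚ) hc
      rw [Nat.cast_mul, Nat.cast_prod] at this
      rw [← this]
      congr 1
      refine Finset.prod_congr rfl fun ℓ h => ?_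
      rw [Nat.cast_sub (htp ℓ h).one_le, Nat.cast_one]
    rw [hcQ]
  rw [Finset.sum_congr rfl step2, ← Finset.mul_sum]
  have e2 : (∑ t ∈ n.primeFactors.powerset, ∏ ℓ ∈ t,
        (-1 / (Nat.card (GL (Fin 2) (ZMod ℓ)) : ℚ)))
      = ∏ ℓ ∈ n.primeFactors, (1 - 1 / (Nat.card (GL (Fin 2) (ZMod ℓ)) : ℚ)) := by
    have : ∀ ℓ ∈ n.primeFactors, (1 - 1 / (Nat.card (GL (Fin 2) (ZMod ℓ)) : ℚ))
        = (-1 / (Nat.card (GL (Fin 2) (ZMod ℓ)) : ℚ)) + 1 := fun ℓ _ => by ring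
    rw [Finset.prod_congr rfl this, Finset.prod_add]
    exact (Finset.sum_congr rfl (fun t _ => by rw [Finset.prod_const_one, mul_one])).symm
  rw [e2, ← mul_assoc, one_div, inv_mul_cancel₀ htot.ne', one_mul]
end

section
/- Let n ≥ 1 and let k be coprime to n. Then C^{Cyc}_{n,1} ≤ C^{Cyc}_{n,k} ≤ C^{Cyc}_{n,−1}, where C^{Cyc}_{n,k} = (1/φ(n)) · ∏_{ℓ | gcd(n,k−1)} (1 − φ(ℓ)/|GL₂(ℤ/ℓℤ)|) · ∏_{ℓ ∤ n} (1 − 1/|GL₂(ℤ/ℓℤ)|); moreover the first inequality is strict for some k if and only if n is not a power of 2, i.e., equality C^{Cyc}_{n,k} = C^{Cyc}_{n,1} for all k coprime to n holds exactly when n is a power of 2. -/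
open Finset

section Aux

lemma aux_tprod_pos {ι : Type*} (f : ι → ℝ) (hf : ∀ i, 0 < f i)
    (h : Summable fun i => Real.log (f i)) : 0 < ∏' i, f i := by
  have hp := h.hasSum.rexp
  rw [show Real.exp ∘ (fun i => Real.log (f i)) = f from
    funext fun i => Real.exp_log (hf i)] at hp
  rw [hp.tprod_eq]
  exact Real.exp_pos _

lemma aux_glcard_eq (ℓ : ℕ) (hℓ : ℓ.Prime) :
    Nat.card (GL (Fin 2) (ZMod ℓ)) = (ℓ*ℓ - 1) * (ℓ*ℓ - ℓ) := by
  haveI : Fact ℓ.Prime := ⟨hℓ⟩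
  rw [Matrix.card_GL_field]
  simp [Fin.prod_univ_two, ZMod.card, sq, pow_succ, pow_zero]

lemma aux_glcard_ge (ℓ : ℕ) (hℓ : ℓ.Prime) : ℓ^2 ≤ Nat.card (GL (Fin 2) (ZMod ℓ)) := by
  have h2 := hℓ.two_le
  have hq : 2*ℓ ≤ ℓ*ℓ := Nat.mul_le_mul_right ℓ h2
  calc ℓ^2 = ℓ*ℓ := sq ℓ
    _ ≤ (ℓ*ℓ-1)*(ℓ*ℓ-ℓ) := Nat.mul_le_mul (by omega) (by omega)
    _ = _ := (aux_glcard_eq ℓ hℓ).symm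

lemma aux_glcard_real_ge (ℓ : ℕ) (hℓ : ℓ.Prime) :
    ((ℓ:ℝ))^2 ≤ (Nat.card (GL (Fin 2) (ZMod ℓ)) : ℝ) := by
  exact_mod_cast aux_glcard_ge ℓ hℓ

lemma aux_neg_log_le {x : ℝ} (h0 : 0 ≤ x) (h1 : x ≤ 1/2) : -Real.log (1 - x) ≤ 2 * x := by
  have hx : 0 < 1 - x := by linarith
  have h := Real.log_le_sub_one_of_pos (show (0:ℝ) < (1-x)⁻¹ by positivity)
  rw [Real.log_inv] at h
  have h3 : (1-x)⁻¹ - 1 ≤ 2*x := by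
    rw [inv_eq_one_div, div_sub' hx.ne', div_le_iff₀ hx]
    nlinarith
  linarith

lemma aux_T_pos (n : ℕ) : 0 < ∏' p : Nat.Primes,
    (if (p : ℕ) ∣ n then (1 : ℝ)
      else 1 - 1 / (Nat.card (GL (Fin 2) (ZMod (p : ℕ))) : ℝ)) := by
  set f : Nat.Primes → ℝ := fun p =>
    if (p : ℕ) ∣ n then (1 : ℝ)
      else 1 - 1 / (Nat.card (GL (Fin 2) (ZMod (p : ℕ))) : ℝ) with hf
  have key : ∀ p : Nat.Primes, 0 < f p ∧ -Real.log (f p) ≤ 2 / ((p:ℕ):ℝ)^2 := by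
    intro p
    have hp2 : (2:ℝ) ≤ ((p:ℕ):ℝ) := by exact_mod_cast p.2.two_le
    have hpsq : (4:ℝ) ≤ ((p:ℕ):ℝ)^2 := by nlinarith
    have hN := aux_glcard_real_ge (p:ℕ) p.2
    have hN4 : (4:ℝ) ≤ (Nat.card (GL (Fin 2) (ZMod (p:ℕ))) : ℝ) := le_trans hpsq hN
    have hx0 : (0:ℝ) < 1 / (Nat.card (GL (Fin 2) (ZMod (p:ℕ))) : ℝ) := by positivity
    have hx1 : 1 / (Nat.card (GL (Fin 2) (ZMod (p:ℕ))) : ℝ) ≤ 1/((p:ℕ):ℝ)^2 :=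
      one_div_le_one_div_of_le (by positivity) hN
    have hx2 : 1 / (Nat.card (GL (Fin 2) (ZMod (p:ℕ))) : ℝ) ≤ 1/2 :=
      le_trans (one_div_le_one_div_of_le (by norm_num) hN4) (by norm_num)
    constructor
    · rw [hf]; dsimp only
      split
      · norm_num
      · linarith
    · rw [hf]; dsimp only
      split
      · simp; positivity
      · refine le_trans (aux_neg_log_le hx0.le hx2) ?_
        rw [div_eq_mul_one_div 2]
        exact mul_le_mul_of_nonneg_left hx1 (by norm_num)
  have hsum2 : Summable (fun p : Nat.Primes => 2 / ((p : ℕ) : ℝ)^2) := by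
    have h : Summable (fun n : ℕ => 2 * (1 / ((n : ℝ))^2)) :=
      (Real.summable_one_div_nat_pow.mpr (by norm_num)).mul_left 2
    refine (h.comp_injective (Nat.Primes.coe_nat_injective)).congr fun p => ?_
    simp [Function.comp, mul_one_div, div_eq_mul_inv]
  have hlog : Summable fun p => Real.log (f p) := by
    have hs : Summable fun p => -Real.log (f p) :=
      Summable.of_nonneg_of_le
        (fun p => by
          have hle : f p ≤ 1 := by
            rw [hf]; dsimp only; split
            · exact le_refl 1
            · have : (0:ℝ) ≤ 1 / (Nat.card (GL (Fin 2) (ZMod (p:ℕ))) : ℝ) := by positivity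
              linarith
          exact neg_nonneg.mpr (Real.log_nonpos (key p).1.le hle))
        (fun p => (key p).2) hsum2
    simpa using hs.neg
  exact aux_tprod_pos f (fun p => (key p).1) hlog

/-- The local factor. -/
noncomputable def auxF (ℓ : ℕ) : ℝ :=
  1 - (Nat.totient ℓ : ℝ) / (Nat.card (GL (Fin 2) (ZMod ℓ)) : ℝ)

lemma auxF_pos {ℓ : ℕ} (hℓ : ℓ.Prime) : 0 < auxF ℓ := by
  have h2 := hℓ.two_le
  have hN := aux_glcard_real_ge ℓ hℓ
  have hp2 : (2:ℝ) ≤ (ℓ:ℝ) := by exact_mod_cast h2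
  have hNpos : (0:ℝ) < (Nat.card (GL (Fin 2) (ZMod ℓ)) : ℝ) := by nlinarith
  have htot : (Nat.totient ℓ : ℝ) < (Nat.card (GL (Fin 2) (ZMod ℓ)) : ℝ) := by
    have h1 : (Nat.totient ℓ : ℝ) ≤ (ℓ:ℝ) := by exact_mod_cast Nat.totient_le ℓ
    nlinarith
  have := (div_lt_one hNpos).mpr htot
  unfold auxF; linarith

lemma auxF_lt_one {ℓ : ℕ} (hℓ : ℓ.Prime) : auxF ℓ < 1 := by
  have h2 := hℓ.two_le
  have hN := aux_glcard_real_ge ℓ hℓ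
  have hp2 : (2:ℝ) ≤ (ℓ:ℝ) := by exact_mod_cast h2
  have hNpos : (0:ℝ) < (Nat.card (GL (Fin 2) (ZMod ℓ)) : ℝ) := by nlinarith
  have htot : (0:ℝ) < (Nat.totient ℓ : ℝ) := by
    exact_mod_cast Nat.totient_pos.mpr hℓ.pos
  have := div_pos htot hNpos
  unfold auxF; linarith

lemma auxF_prod_pos {S : Finset ℕ} (hS : ∀ ℓ ∈ S, ℓ.Prime) :
    0 < ∏ ℓ ∈ S, auxF ℓ :=
  Finset.prod_pos fun ℓ hℓ => auxF_pos (hS ℓ hℓ)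

lemma auxF_prod_anti {S S' : Finset ℕ} (hS : ∀ ℓ ∈ S, ℓ.Prime) (hsub : S' ⊆ S) :
    ∏ ℓ ∈ S, auxF ℓ ≤ ∏ ℓ ∈ S', auxF ℓ := by
  rw [← Finset.prod_sdiff hsub]
  have h1 : ∏ ℓ ∈ S \ S', auxF ℓ ≤ 1 :=
    Finset.prod_le_one (fun ℓ hℓ => (auxF_pos (hS ℓ (Finset.mem_sdiff.mp hℓ).1)).le)
      (fun ℓ hℓ => (auxF_lt_one (hS ℓ (Finset.mem_sdiff.mp hℓ).1)).le)
  have h2 : 0 < ∏ ℓ ∈ S', auxF ℓ := auxF_prod_pos (fun ℓ hℓ => hS ℓ (hsub hℓ))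
  nlinarith [h1, h2, auxF_prod_pos (fun ℓ hℓ => hS ℓ (Finset.mem_sdiff.mp hℓ).1 :
    ∀ ℓ ∈ S \ S', ℓ.Prime)]

lemma auxF_prod_strict_anti {S S' : Finset ℕ} (hS : ∀ ℓ ∈ S, ℓ.Prime) (hsub : S' ⊆ S)
    {ℓ0 : ℕ} (h0 : ℓ0 ∈ S) (h0' : ℓ0 ∉ S') :
    ∏ ℓ ∈ S, auxF ℓ < ∏ ℓ ∈ S', auxF ℓ := by
  rw [← Finset.prod_sdiff hsub]
  have hmem : ℓ0 ∈ S \ S' := Finset.mem_sdiff.mpr ⟨h0, h0'⟩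
  have hprime : ∀ ℓ ∈ S \ S', ℓ.Prime := fun ℓ hℓ => hS ℓ (Finset.mem_sdiff.mp hℓ).1
  have hdlt : ∏ ℓ ∈ S \ S', auxF ℓ < 1 := by
    rw [← Finset.mul_prod_erase _ _ hmem]
    have he1 : ∏ ℓ ∈ (S \ S').erase ℓ0, auxF ℓ ≤ 1 :=
      Finset.prod_le_one
        (fun ℓ hℓ => (auxF_pos (hprime ℓ (Finset.erase_subset _ _ hℓ))).le)
        (fun ℓ hℓ => (auxF_lt_one (hprime ℓ (Finset.erase_subset _ _ hℓ))).le)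
    have he2 : 0 < ∏ ℓ ∈ (S \ S').erase ℓ0, auxF ℓ :=
      auxF_prod_pos (fun ℓ hℓ => hprime ℓ (Finset.erase_subset _ _ hℓ))
    have hF1 := auxF_lt_one (hS ℓ0 h0)
    have hF0 := auxF_pos (hS ℓ0 h0)
    nlinarith
  have h2 : 0 < ∏ ℓ ∈ S', auxF ℓ := auxF_prod_pos (fun ℓ hℓ => hS ℓ (hsub hℓ))
  nlinarith [auxF_prod_pos hprime]

lemma aux_coprime_two {k : ℤ} {n : ℕ} (hco : IsCoprime k (n : ℤ)) (h2 : 2 ∣ n) :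
    ((k : ZMod 2) = 1) := by
  have hndvd : ¬ ((2:ℤ) ∣ k) := by
    intro hdk
    have hdn : (2:ℤ) ∣ (n:ℤ) := by exact_mod_cast h2
    have : IsUnit (2:ℤ) := hco.isUnit_of_dvd' hdk hdn
    rw [Int.isUnit_iff] at this
    omega
  have hne : (k : ZMod 2) ≠ 0 := by
    rw [Ne, ZMod.intCast_zmod_eq_zero_iff_dvd]
    exact_mod_cast hndvd
  revert hne
  have : ∀ x : ZMod 2, x ≠ 0 → x = 1 := by decide
  exact this _

end Aux

/-- The average cyclicity constant for the progression `k (mod n)`: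
`C^Cyc_{n,k} = (1/φ(n)) · ∏_{ℓ ∣ gcd(n,k−1)} (1 − φ(ℓ)/|GL₂(ℤ/ℓℤ)|)
  · ∏_{ℓ ∤ n} (1 − 1/|GL₂(ℤ/ℓℤ)|)`,
where the last (infinite) product runs over the primes not dividing `n`. -/
noncomputable def Ccyc (n : ℕ) (k : ℤ) : ℝ :=
  (1 / (Nat.totient n : ℝ)) *
    (∏ ℓ ∈ n.primeFactors.filter (fun ℓ => (k : ZMod ℓ) = 1),
      (1 - (Nat.totient ℓ : ℝ) / (Nat.card (GL (Fin 2) (ZMod ℓ)) : ℝ))) *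
    ∏' p : Nat.Primes,
      (if (p : ℕ) ∣ n then (1 : ℝ)
        else 1 - 1 / (Nat.card (GL (Fin 2) (ZMod (p : ℕ))) : ℝ))

/-- For every `k` coprime to `n` one has
`C^Cyc_{n,1} ≤ C^Cyc_{n,k} ≤ C^Cyc_{n,−1}`, and all the `C^Cyc_{n,k}` (for `k`
coprime to `n`) coincide exactly when `n` is a power of `2`. -/
theorem stmt19 (n : ℕ) (hn : 1 ≤ n) :
    (∀ k : ℤ, IsCoprime k (n : ℤ) →
      Ccyc n 1 ≤ Ccyc n k ∧ Ccyc n k ≤ Ccyc n (-1)) ∧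
    ((∀ k : ℤ, IsCoprime k (n : ℤ) → Ccyc n k = Ccyc n 1) ↔ ∃ m : ℕ, n = 2 ^ m) := by
  have hn0 : n ≠ 0 := by omega
  have hA : (0:ℝ) < 1 / (Nat.totient n : ℝ) := by
    have := Nat.totient_pos.mpr (by omega : 0 < n)
    positivity
  have hT := aux_T_pos n
  have hprimes : ∀ ℓ ∈ n.primeFactors, ℓ.Prime := fun ℓ hℓ =>
    Nat.prime_of_mem_primeFactors hℓ
  have hC : ∀ k : ℤ, Ccyc n k = (1 / (Nat.totient n : ℝ)) *
      (∏ ℓ ∈ n.primeFactors.filter (fun ℓ => (k : ZMod ℓ) = 1), auxF ℓ) *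
      ∏' p : Nat.Primes,
        (if (p : ℕ) ∣ n then (1 : ℝ)
          else 1 - 1 / (Nat.card (GL (Fin 2) (ZMod (p : ℕ))) : ℝ)) := by
    intro k; simp only [Ccyc, auxF]
  have hS1 : n.primeFactors.filter (fun ℓ => (((1:ℤ) : ZMod ℓ) = 1)) = n.primeFactors := by
    refine Finset.filter_true_of_mem fun ℓ _ => ?_
    push_cast; rfl
  have hneg_sub : ∀ k : ℤ, IsCoprime k (n : ℤ) →
      n.primeFactors.filter (fun ℓ => (((-1:ℤ) : ZMod ℓ) = 1)) ⊆
        n.primeFactors.filter (fun ℓ => ((k : ZMod ℓ) = 1)) := by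
    intro k hco ℓ hℓ
    obtain ⟨hmem, hval⟩ := Finset.mem_filter.mp hℓ
    have hℓp := hprimes ℓ hmem
    have hℓ2 : ℓ = 2 := by
      by_contra hne
      have h2lt : 2 < ℓ := lt_of_le_of_ne hℓp.two_le (Ne.symm hne)
      haveI : Fact (2 < ℓ) := ⟨h2lt⟩
      apply ZMod.neg_one_ne_one (n := ℓ)
      push_cast at hval
      exact hval
    subst hℓ2
    exact Finset.mem_filter.mpr ⟨hmem, aux_coprime_two hco (Nat.dvd_of_mem_primeFactors hmem)⟩
  constructor
  · intro k hco
    constructor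
    · rw [hC 1, hC k, hS1]
      have hP : ∏ ℓ ∈ n.primeFactors, auxF ℓ ≤
          ∏ ℓ ∈ n.primeFactors.filter (fun ℓ => ((k : ZMod ℓ) = 1)), auxF ℓ :=
        auxF_prod_anti hprimes (Finset.filter_subset _ _)
      exact mul_le_mul_of_nonneg_right (mul_le_mul_of_nonneg_left hP hA.le) hT.le
    · rw [hC (-1), hC k]
      have hP : ∏ ℓ ∈ n.primeFactors.filter (fun ℓ => ((k : ZMod ℓ) = 1)), auxF ℓ ≤
          ∏ ℓ ∈ n.primeFactors.filter (fun ℓ => (((-1:ℤ) : ZMod ℓ) = 1)), auxF ℓ :=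
        auxF_prod_anti (fun ℓ hℓ => hprimes ℓ (Finset.filter_subset _ _ hℓ))
          (hneg_sub k hco)
      exact mul_le_mul_of_nonneg_right (mul_le_mul_of_nonneg_left hP hA.le) hT.le
  · constructor
    · intro h
      by_contra hnp
      push_neg at hnp
      have hodd : ∃ p, p.Prime ∧ p ∣ n ∧ p ≠ 2 := by
        by_contra hall
        push_neg at hall
        exact hnp _ (Nat.eq_prime_pow_of_unique_prime_dvd hn0
          (fun {d} hd hdvd => hall d hd hdvd))
      obtain ⟨ℓ0, hℓ0p, hℓ0dvd, hℓ0ne⟩ := hodd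
      have hco : IsCoprime (-1 : ℤ) (n:ℤ) := ⟨-1, 0, by ring⟩
      have heq := h (-1) hco
      rw [hC (-1), hC 1, hS1] at heq
      have hmem : ℓ0 ∈ n.primeFactors := Nat.mem_primeFactors.mpr ⟨hℓ0p, hℓ0dvd, hn0⟩
      have hnotmem : ℓ0 ∉ n.primeFactors.filter (fun ℓ => (((-1:ℤ) : ZMod ℓ) = 1)) := by
        intro hx
        have hval := (Finset.mem_filter.mp hx).2
        have h2lt : 2 < ℓ0 := lt_of_le_of_ne hℓ0p.two_le (Ne.symm hℓ0ne)
        haveI : Fact (2 < ℓ0) := ⟨h2lt⟩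
        apply ZMod.neg_one_ne_one (n := ℓ0)
        push_cast at hval
        exact hval
      have hlt : ∏ ℓ ∈ n.primeFactors, auxF ℓ <
          ∏ ℓ ∈ n.primeFactors.filter (fun ℓ => (((-1:ℤ) : ZMod ℓ) = 1)), auxF ℓ :=
        auxF_prod_strict_anti hprimes (Finset.filter_subset _ _) hmem hnotmem
      have hstrict := mul_lt_mul_of_pos_right (mul_lt_mul_of_pos_left hlt hA) hT
      linarith
    · rintro ⟨m, hm⟩ k hco
      have hfilter : n.primeFactors.filter (fun ℓ => ((k : ZMod ℓ) = 1)) = n.primeFactors := by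
        refine Finset.filter_true_of_mem fun ℓ hℓ => ?_
        have hℓp := hprimes ℓ hℓ
        have hdvd := Nat.dvd_of_mem_primeFactors hℓ
        have hℓ2 : ℓ = 2 := by
          rw [hm] at hdvd
          exact (Nat.prime_dvd_prime_iff_eq hℓp Nat.prime_two).mp (hℓp.dvd_of_dvd_pow hdvd)
        subst hℓ2
        exact aux_coprime_two hco (Nat.dvd_of_mem_primeFactors hℓ)
      rw [hC k, hC 1, hS1, hfilter]
end
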